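/- arXiv:2107.06952 — 6 statements merged into one kernel-verified Lean document; each statement's English description precedes it below -/
import Mathlib

section
/- Let α := lim_{n→∞} c_n/2^n (this limit exists). Then there is a constant K > 0 such that |c_{2m}/2^{2m} − α| ≤ K · 2^{−(3/2)m} for all m ≥ 4. -/
/-- The Conway number (correlation) `C(A,B)` of two head/tail strings of length `n`,
encoded as functions `Fin n → Bool` (with `H = true`, `T = false`, and 0-indexed
positions): `C(A,B) = ∑_{i=1}^n δ_i 2^{n-i}` where `δ_i = 1` iff `a_{i+j} = b_{1+j}`
for all `j = 0,…,n-i`. -/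
def conway {n : ℕ} (A B : Fin n → Bool) : ℕ :=
  ∑ i : Fin n,
    if (∀ j : Fin n, (i : ℕ) + (j : ℕ) < n → A (i + j) = B j) then 2 ^ (n - 1 - (i : ℕ)) else 0

/-- `cstar m` is the number of head/tail strings of length `m` beginning with `HT`,
ending with `TH`, whose autocorrelation is `2^{m-1} + 1`. -/
def cstar (m : ℕ) : ℕ :=
  Fintype.card {A : Fin m → Bool //
    (∀ i : Fin m, (i : ℕ) = 0 → A i = true) ∧
    (∀ i : Fin m, (i : ℕ) = 1 → A i = false) ∧
    (∀ i : Fin m, (i : ℕ) = m - 2 → A i = false) ∧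
    (∀ i : Fin m, (i : ℕ) = m - 1 → A i = true) ∧
    conway A A = 2 ^ (m - 1) + 1}

/-- `c n = 2 * cstar (n-1)`: by Csirik's characterization, the number of optimal
strategies for Player I in the Penney-Ante game with strings of length `n`. -/
def c (n : ℕ) : ℕ := 2 * cstar (n - 1)

/-!
Write `T n` for the number of strings of length `n` that begin with `HT`, end with `TH` and have
no period in `[1, n - 2]`; by Conway's formula these are exactly the strings counted by
`cstar n`, so `c (2k) = 2 T(2k - 1)`. Three facts relate lengths `n` and about `n / 2`: a period
below `n / 2` has a multiple in `[n / 2, n - 2]`; periods `≥ n / 2` never compare the middle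
letter with anything, so that letter can be inserted or deleted freely; and a string with period
`⌊n / 2⌋` is the periodic extension of its prefix of length `⌈n / 2⌉`. Together they give
`T(n + 1) = 2 T(n) ± T(⌊n/2⌋ + 1)`, and two steps of this telescope to
`T(2k + 1) - 4 T(2k - 1) = ±T(⌊k/2⌋ + 1) = O(2^{k/2})`. So consecutive terms of `c (2k) / 4^k`
differ by `O(2^{-3k/2})`, and summing this geometric tail bounds the distance to the limit.
-/

open Finset Filter Topology
open scoped Classical

lemma dist_le_of_forall_ge_le_geometric_of_tendsto {X : Type*} [PseudoMetricSpace X] {f : ℕ → X}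
    {a : X} (ha : Tendsto f atTop (𝓝 a)) {r : ℝ} (hr : r < 1) {N : ℕ}
    (hu : ∀ n ≥ N, dist (f n) (f (n + 1)) ≤ r ^ n) {n : ℕ} (hn : N ≤ n) :
    dist (f n) a ≤ r ^ n / (1 - r) := by
  have hshift := dist_le_of_le_geometric_of_tendsto (f := fun k => f (k + N)) r (r ^ N) hr
    (fun k => by simpa [pow_add, mul_comm, add_right_comm] using hu (k + N) (by omega))
    ((tendsto_add_atTop_iff_nat N).2 ha) (n - N)
  rwa [Nat.sub_add_cancel hn, ← pow_add, Nat.add_sub_cancel' hn] at hshift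

namespace Penney

variable {m : ℕ}

/-- Letters are counted from `0`; past the end of `A` the value is `false`. -/
def letter (A : Fin m → Bool) (i : ℕ) : Bool := if h : i < m then A ⟨i, h⟩ else false

@[simp] lemma letter_val (A : Fin m → Bool) (i : Fin m) : letter A i = A i := by
  simp [letter]

lemma letter_of_le {A : Fin m → Bool} {i : ℕ} (h : m ≤ i) : letter A i = false := by
  simp [letter, Nat.not_lt.mpr h]

lemma letter_of_lt {A : Fin m → Bool} {i : ℕ} (h : i < m) : letter A i = A ⟨i, h⟩ := by
  simp [letter, h]

lemma ext_letter {A B : Fin m → Bool} (h : ∀ i < m, letter A i = letter B i) : A = B :=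
  funext fun i => by simpa using h i i.2

lemma forall_val_eq_imp_iff {A : Fin m → Bool} {k : ℕ} (hk : k < m) (b : Bool) :
    (∀ i : Fin m, (i : ℕ) = k → A i = b) ↔ letter A k = b := by
  refine ⟨fun h => by simpa [letter_of_lt hk] using h ⟨k, hk⟩ rfl, fun h i hi => ?_⟩
  rw [← letter_val A i, hi, h]

def IsFramed (A : Fin m → Bool) : Prop :=
  letter A 0 = true ∧ letter A 1 = false ∧ letter A (m - 2) = false ∧ letter A (m - 1) = true

def HasPeriod (A : Fin m → Bool) (p : ℕ) : Prop :=
  ∀ j, p + j < m → letter A (p + j) = letter A j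

section Periods

variable {A : Fin m → Bool} {p q : ℕ}

lemma hasPeriod_zero (A : Fin m → Bool) : HasPeriod A 0 := fun j _ => by rw [zero_add]

lemma hasPeriod_of_le (h : m ≤ p) : HasPeriod A p := fun _ hj => by omega

lemma HasPeriod.add (hp : HasPeriod A p) (hq : HasPeriod A q) : HasPeriod A (p + q) :=
  fun j hj => by rw [add_assoc, hp _ (by omega), hq _ (by omega)]

lemma HasPeriod.mul (hp : HasPeriod A p) (k : ℕ) : HasPeriod A (p * k) := by
  induction k with
  | zero => exact hasPeriod_zero A
  | succ k ih => exact ih.add hp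

/-- The least multiple of `q` that is `≥ a` lies below `a + q`. -/
lemma HasPeriod.exists_mem_Ico (hq : HasPeriod A q) (hq0 : 0 < q) (a : ℕ) :
    ∃ p, a ≤ p ∧ p < a + q ∧ HasPeriod A p := by
  refine ⟨q * ((a + q - 1) / q), ?_, ?_, hq.mul _⟩
  all_goals
    have := Nat.div_add_mod (a + q - 1) q
    have := Nat.mod_lt (a + q - 1) hq0
    omega

lemma IsFramed.hasPeriod_sub_one (hA : IsFramed A) : HasPeriod A (m - 1) := fun j hj => by
  obtain rfl : j = 0 := by omega
  rw [add_zero, hA.2.2.2, hA.1]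

lemma isFramed_iff_forall (hm : 2 ≤ m) : IsFramed A ↔
    (∀ i : Fin m, (i : ℕ) = 0 → A i = true) ∧ (∀ i : Fin m, (i : ℕ) = 1 → A i = false) ∧
    (∀ i : Fin m, (i : ℕ) = m - 2 → A i = false) ∧ (∀ i : Fin m, (i : ℕ) = m - 1 → A i = true) := by
  simp only [forall_val_eq_imp_iff (by omega : 0 < m), forall_val_eq_imp_iff (by omega : 1 < m),
    forall_val_eq_imp_iff (by omega : m - 2 < m), forall_val_eq_imp_iff (by omega : m - 1 < m),
    IsFramed]

lemma conway_self (A : Fin m → Bool) :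
    conway A A = ∑ i : Fin m, if HasPeriod A i then 2 ^ (m - 1 - i) else 0 := by
  refine sum_congr rfl fun i _ => if_congr ?_ rfl rfl
  have hadd : ∀ j : Fin m, ∀ h : (i : ℕ) + j < m, i + j = ⟨i + j, h⟩ := fun j h =>
    Fin.ext (by simp [Fin.val_add, Nat.mod_eq_of_lt h])
  refine ⟨fun h j hj => ?_, fun h j hj => ?_⟩
  · simpa [letter, hj, hadd ⟨j, by omega⟩ hj, show j < m by omega] using h ⟨j, by omega⟩ hj
  · simpa [letter, hj, hadd j hj] using h j hj

lemma conway_self_eq_iff (hm : 3 ≤ m) (hA : IsFramed A) :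
    conway A A = 2 ^ (m - 1) + 1 ↔ ∀ q, 1 ≤ q → q ≤ m - 2 → ¬ HasPeriod A q := by
  obtain ⟨n, rfl⟩ : ∃ n, m = n + 2 := ⟨m - 2, by omega⟩
  have hlast : HasPeriod A (n + 1) := hA.hasPeriod_sub_one
  rw [conway_self, Fin.sum_univ_succ, Fin.sum_univ_castSucc]
  simp only [Fin.val_zero, Fin.val_succ, Fin.val_castSucc, Fin.val_last, hasPeriod_zero, hlast,
    if_true, Nat.sub_zero, show n + 2 - 1 - (n + 1) = 0 by omega, pow_zero]
  rw [show ∀ S a : ℕ, a + (S + 1) = a + 1 ↔ S = 0 from fun S a => by omega, sum_eq_zero_iff]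
  simp only [mem_univ, ite_eq_right_iff, pow_eq_zero_iff', OfNat.ofNat_ne_zero, false_and,
    imp_false, forall_const, Nat.add_sub_cancel]
  refine ⟨fun h q hq1 hqn => ?_, fun h i => h _ (by omega) (by omega)⟩
  simpa [Nat.sub_add_cancel hq1] using h ⟨q - 1, by omega⟩

noncomputable def periodFree (m a : ℕ) : Finset (Fin m → Bool) :=
  {A | IsFramed A ∧ ∀ q, a ≤ q → q ≤ m - 2 → ¬ HasPeriod A q}

lemma mem_periodFree {a : ℕ} :
    A ∈ periodFree m a ↔ IsFramed A ∧ ∀ q, a ≤ q → q ≤ m - 2 → ¬ HasPeriod A q := by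
  simp [periodFree]

lemma cstar_eq_card_periodFree (hm : 3 ≤ m) : cstar m = #(periodFree m 1) := by
  rw [cstar, Fintype.card_subtype]
  congr 1
  ext A
  rw [mem_filter, mem_periodFree]
  refine ⟨fun ⟨_, h0, h1, h2, h3, hc⟩ => ?_, fun ⟨hA, hq⟩ => ?_⟩
  · have hA : IsFramed A := (isFramed_iff_forall (by omega)).2 ⟨h0, h1, h2, h3⟩
    exact ⟨hA, (conway_self_eq_iff hm hA).1 hc⟩
  · obtain ⟨h0, h1, h2, h3⟩ := (isFramed_iff_forall (by omega)).1 hA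
    exact ⟨mem_univ A, h0, h1, h2, h3, (conway_self_eq_iff hm hA).2 hq⟩

lemma periodFree_eq_periodFree_one {a : ℕ} (ha : 1 ≤ a) (ham : 2 * a ≤ m) :
    periodFree m a = periodFree m 1 := by
  ext A
  simp only [mem_periodFree]
  refine and_congr_right fun _ => ⟨fun h q hq1 hqm hq => ?_, fun h q hq => h q (by omega)⟩
  by_cases hqa : a ≤ q
  · exact h q hqa hqm hq
  · obtain ⟨p, hap, hpa, hp⟩ := hq.exists_mem_Ico hq1 a
    exact h p hap (by omega) hp

lemma card_periodFree_eq_add {a : ℕ} (ha : a ≤ m - 2) :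
    #{A ∈ periodFree m (a + 1) | HasPeriod A a} + #(periodFree m a) = #(periodFree m (a + 1)) := by
  have : periodFree m a = {A ∈ periodFree m (a + 1) | ¬ HasPeriod A a} := by
    ext A
    simp only [mem_filter, mem_periodFree]
    refine ⟨fun ⟨hA, h⟩ => ⟨⟨hA, fun q hq => h q (by omega)⟩, h a le_rfl ha⟩,
      fun ⟨⟨hA, h⟩, ha'⟩ => ⟨hA, fun q hq hqm => ?_⟩⟩
    rcases hq.eq_or_lt with rfl | hq
    exacts [ha', h q hq hqm]
  rw [this]
  exact card_filter_add_card_filter_not _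

end Periods

section Insertion

variable {A : Fin (m + 1) → Bool} {p : Fin (m + 1)} {q : ℕ}

lemma letter_removeNth (i : ℕ) :
    letter (p.removeNth A) i = if i < p then letter A i else letter A (i + 1) := by
  by_cases him : i < m
  · rw [letter_of_lt him, Fin.removeNth_apply]
    split_ifs with hip
    · rw [Fin.succAbove_of_castSucc_lt _ _ (by simpa [Fin.lt_def] using hip), ← letter_val A]; rfl
    · rw [Fin.succAbove_of_le_castSucc _ _ (by simp [Fin.le_def]; omega), ← letter_val A]; rfl
  · rw [letter_of_le (by omega), if_neg (by omega), letter_of_le (by omega)]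

lemma isFramed_removeNth_iff (hp : 2 ≤ (p : ℕ)) (hpm : (p : ℕ) + 2 ≤ m) :
    IsFramed (p.removeNth A) ↔ IsFramed A := by
  simp only [IsFramed, letter_removeNth]
  rw [if_pos (by omega), if_pos (by omega), if_neg (by omega), if_neg (by omega),
    show m - 2 + 1 = m + 1 - 2 by omega, show m - 1 + 1 = m + 1 - 1 by omega]

lemma hasPeriod_removeNth_iff (hpq : (p : ℕ) ≤ q) (hqm : m ≤ q + p) :
    HasPeriod (p.removeNth A) q ↔ HasPeriod A (q + 1) := by
  refine forall_congr' fun j => ?_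
  by_cases hj : q + j < m
  · rw [letter_removeNth, letter_removeNth, if_neg (by omega), if_pos (by omega),
      show q + j + 1 = q + 1 + j by omega]
    simp only [hj, show q + 1 + j < m + 1 by omega]
  · simp only [hj, show ¬ q + 1 + j < m + 1 by omega, false_imp_iff]

lemma removeNth_mem_periodFree_iff {a : ℕ} (ham : m ≤ 2 * a) (ha : a + 2 ≤ m) :
    Fin.removeNth ⟨m - a, by omega⟩ A ∈ periodFree m a ↔ A ∈ periodFree (m + 1) (a + 1) := by
  have hper : ∀ q, a ≤ q →
      (HasPeriod (Fin.removeNth ⟨m - a, by omega⟩ A) q ↔ HasPeriod A (q + 1)) := fun q hq =>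
    hasPeriod_removeNth_iff (show m - a ≤ q by omega) (show m ≤ q + (m - a) by omega)
  rw [mem_periodFree, mem_periodFree,
    isFramed_removeNth_iff (show 2 ≤ m - a by omega) (show m - a + 2 ≤ m by omega)]
  refine and_congr_right fun _ => ⟨fun h q hqa hqm hq => ?_, fun h q hqa hqm hq => ?_⟩
  · obtain ⟨q, rfl⟩ : ∃ q', q = q' + 1 := ⟨q - 1, by omega⟩
    exact h q (by omega) (by omega) ((hper q (by omega)).2 hq)
  · exact h (q + 1) (by omega) (by omega) ((hper q hqa).1 hq)

lemma card_periodFree_succ {a : ℕ} (ham : m ≤ 2 * a) (ha : a + 2 ≤ m) :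
    #(periodFree (m + 1) (a + 1)) = 2 * #(periodFree m a) := by
  have : periodFree (m + 1) (a + 1) = (univ ×ˢ periodFree m a).map
      (Fin.insertNthEquiv (fun _ => Bool) ⟨m - a, by omega⟩).toEmbedding := by
    ext A
    rw [mem_map_equiv, mem_product]
    simp [removeNth_mem_periodFree_iff ham ha]
  rw [this, card_map, card_product, card_univ, Fintype.card_bool]

end Insertion

lemma letter_take {ℓ : ℕ} (h : ℓ ≤ m) (A : Fin m → Bool) {i : ℕ} (hi : i < ℓ) :
    letter (Fin.take ℓ h A) i = letter A i := by
  rw [letter_of_lt hi, letter_of_lt (by omega)]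
  rfl

section PeriodicExtension

variable {a ℓ : ℕ}

def periodicExtend (a : ℕ) (y : Fin ℓ → Bool) : Fin (a + ℓ) → Bool :=
  fun i => letter y (if (i : ℕ) < ℓ then i else i - a)

lemma letter_periodicExtend (y : Fin ℓ → Bool) (i : ℕ) :
    letter (periodicExtend a y) i = letter y (if i < ℓ then i else i - a) := by
  by_cases hi : i < a + ℓ
  · rw [letter_of_lt hi]
    rfl
  · rw [letter_of_le (by omega), if_neg (by omega), letter_of_le (by omega)]

lemma take_periodicExtend (y : Fin ℓ → Bool) :
    Fin.take ℓ (Nat.le_add_left ℓ a) (periodicExtend a y) = y :=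
  ext_letter fun i hi => by rw [letter_take _ _ hi, letter_periodicExtend, if_pos hi]

lemma hasPeriod_periodicExtend {y : Fin ℓ → Bool} (hy : HasPeriod y a) :
    HasPeriod (periodicExtend a y) a := fun j hj => by
  rw [letter_periodicExtend, letter_periodicExtend, if_pos (by omega : j < ℓ)]
  split_ifs with h
  · exact hy j h
  · rw [Nat.add_sub_cancel_left]

variable {A : Fin (a + ℓ) → Bool}

lemma HasPeriod.periodicExtend_take (hA : HasPeriod A a) (haℓ : a ≤ ℓ) :
    periodicExtend a (Fin.take ℓ (Nat.le_add_left ℓ a) A) = A := by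
  refine ext_letter fun i hi => ?_
  rw [letter_periodicExtend]
  split_ifs with h
  · exact letter_take _ _ h
  · rw [letter_take _ _ (by omega), ← hA _ (by omega), Nat.add_sub_cancel' (by omega)]

lemma HasPeriod.hasPeriod_add_iff_take (hA : HasPeriod A a) {p : ℕ} :
    HasPeriod A (a + p) ↔ HasPeriod (Fin.take ℓ (Nat.le_add_left ℓ a) A) p := by
  refine forall_congr' fun j => ?_
  by_cases hj : p + j < ℓ
  · rw [letter_take _ _ hj, letter_take _ _ (by omega), ← hA (p + j) (by omega), add_assoc]
    simp only [hj, show a + (p + j) < a + ℓ by omega]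
  · simp only [hj, show ¬ a + p + j < a + ℓ by omega, false_imp_iff]

lemma HasPeriod.isFramed_take_iff (hA : HasPeriod A a) (hℓ : 2 ≤ ℓ) :
    IsFramed (Fin.take ℓ (Nat.le_add_left ℓ a) A) ↔ IsFramed A := by
  simp only [IsFramed]
  rw [letter_take _ _ (by omega), letter_take _ _ (by omega), letter_take _ _ (by omega),
    letter_take _ _ (by omega), ← hA (ℓ - 2) (by omega), ← hA (ℓ - 1) (by omega),
    show a + (ℓ - 2) = a + ℓ - 2 by omega, show a + (ℓ - 1) = a + ℓ - 1 by omega]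

lemma card_filter_hasPeriod_periodFree (hℓ : 3 ≤ ℓ) (haℓ : a ≤ ℓ) (hℓa : ℓ ≤ a + 1) :
    #{A ∈ periodFree (a + ℓ) (a + 1) | HasPeriod A a} = #(periodFree ℓ 1) := by
  refine card_bij' (fun A _ => Fin.take ℓ (Nat.le_add_left ℓ a) A)
    (fun y _ => periodicExtend a y) (fun A hA => ?_) (fun y hy => ?_)
    (fun A hA => (mem_filter.1 hA).2.periodicExtend_take haℓ)
    (fun y _ => take_periodicExtend y)
  · obtain ⟨hA, hper⟩ := mem_filter.1 hA
    obtain ⟨hfr, hA⟩ := mem_periodFree.1 hA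
    refine mem_periodFree.2 ⟨(hper.isFramed_take_iff (by omega)).2 hfr, fun p hp hpℓ hpA => ?_⟩
    exact hA (a + p) (by omega) (by omega) (hper.hasPeriod_add_iff_take.2 hpA)
  · obtain ⟨hfr, hy⟩ := mem_periodFree.1 hy
    have hyper : HasPeriod y a := by
      rcases haℓ.eq_or_lt with rfl | h
      · exact hasPeriod_of_le le_rfl
      · simpa [show a = ℓ - 1 by omega] using hfr.hasPeriod_sub_one
    have hper := hasPeriod_periodicExtend hyper
    refine mem_filter.2 ⟨mem_periodFree.2 ⟨?_, fun q hq hqm hqA => ?_⟩, hper⟩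
    · rw [← hper.isFramed_take_iff (by omega), take_periodicExtend]
      exact hfr
    · obtain ⟨p, rfl⟩ : ∃ p, q = a + p := ⟨q - a, by omega⟩
      rw [hper.hasPeriod_add_iff_take, take_periodicExtend] at hqA
      exact hy p (by omega) (by omega) hqA

end PeriodicExtension

lemma card_periodFree_add {a ℓ : ℕ} (hℓ : 3 ≤ ℓ) (haℓ : a ≤ ℓ) (hℓa : ℓ ≤ a + 1) :
    #(periodFree (a + ℓ) (a + 1)) = #(periodFree (a + ℓ) 1) + #(periodFree ℓ 1) := by
  rw [← card_periodFree_eq_add (by omega),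
    periodFree_eq_periodFree_one (a := a) (by omega) (by omega),
    card_filter_hasPeriod_periodFree hℓ haℓ hℓa, add_comm]

lemma card_periodFree_succ_sub {n : ℕ} (hn : 4 ≤ n) :
    (#(periodFree (n + 1) 1) : ℤ) - 2 * #(periodFree n 1) =
      (-1) ^ (n + 1) * #(periodFree (n / 2 + 1) 1) := by
  obtain ⟨h, rfl | rfl⟩ : ∃ h, n = 2 * h ∨ n = 2 * h + 1 := ⟨n / 2, by omega⟩
  · have hsplit := card_periodFree_add (a := h) (ℓ := h + 1) (by omega) (by omega) le_rfl
    have hdouble := card_periodFree_succ (m := 2 * h) (a := h) le_rfl (by omega)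
    rw [show h + (h + 1) = 2 * h + 1 by ring] at hsplit
    rw [periodFree_eq_periodFree_one (by omega) le_rfl] at hdouble
    rw [Odd.neg_one_pow ⟨h, rfl⟩, show 2 * h / 2 = h by omega]
    omega
  · have hsplit := card_periodFree_add (a := h + 1) (ℓ := h + 1) (by omega) le_rfl (by omega)
    have hsplit' := card_periodFree_add (a := h) (ℓ := h + 1) (by omega) (by omega) le_rfl
    have hdouble := card_periodFree_succ (m := 2 * h + 1) (a := h + 1) (by omega) (by omega)
    rw [show h + 1 + (h + 1) = 2 * h + 1 + 1 by ring] at hsplit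
    rw [show h + (h + 1) = 2 * h + 1 by ring] at hsplit'
    rw [Even.neg_one_pow ⟨h + 1, by ring⟩, show (2 * h + 1) / 2 = h by omega]
    omega

lemma card_periodFree_two_mul_add_one_sub {k : ℕ} (hk : 4 ≤ k) :
    (#(periodFree (2 * k + 1) 1) : ℤ) - 4 * #(periodFree (2 * k - 1) 1) =
      (-1) ^ k * #(periodFree (k / 2 + 1) 1) := by
  obtain ⟨j, rfl⟩ : ∃ j, k = j + 1 := ⟨k - 1, by omega⟩
  have h1 := card_periodFree_succ_sub (n := 2 * j + 2) (by omega)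
  have h2 := card_periodFree_succ_sub (n := 2 * j + 1) (by omega)
  have h3 := card_periodFree_succ_sub (n := j + 1) (by omega)
  rw [Odd.neg_one_pow ⟨j + 1, by ring⟩, show (2 * j + 2) / 2 + 1 = j + 2 by omega] at h1
  rw [Even.neg_one_pow ⟨j + 1, by ring⟩, show (2 * j + 1) / 2 + 1 = j + 1 by omega,
    show 2 * j + 1 + 1 = 2 * j + 2 by ring] at h2
  rw [show 2 * (j + 1) + 1 = 2 * j + 2 + 1 by ring, show 2 * (j + 1) - 1 = 2 * j + 1 by omega]
  linear_combination h1 + 2 * h2 - h3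

lemma card_periodFree_le (m a : ℕ) : #(periodFree m a) ≤ 2 ^ m := by
  simpa using card_le_univ (periodFree m a)

lemma abs_card_periodFree_two_mul_add_one_sub_le {k : ℕ} (hk : 4 ≤ k) :
    |(#(periodFree (2 * k + 1) 1) : ℝ) - 4 * #(periodFree (2 * k - 1) 1)| ≤ 2 ^ (k / 2 + 1) := by
  have h := congrArg (fun x : ℤ => (x : ℝ)) (card_periodFree_two_mul_add_one_sub hk)
  push_cast at h
  rw [h, abs_mul, abs_pow, abs_neg, abs_one, one_pow, one_mul, Nat.abs_cast]
  exact_mod_cast card_periodFree_le _ _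

lemma c_two_mul {k : ℕ} (hk : 2 ≤ k) : c (2 * k) = 2 * #(periodFree (2 * k - 1) 1) := by
  rw [c, cstar_eq_card_periodFree (by omega)]

lemma dist_c_two_mul_div_le {k : ℕ} (hk : 4 ≤ k) :
    dist ((c (2 * k) : ℝ) / 2 ^ (2 * k)) ((c (2 * (k + 1)) : ℝ) / 2 ^ (2 * (k + 1))) ≤
      ((2 : ℝ) ^ (-(3 / 2 : ℝ))) ^ k := by
  have hsub : (c (2 * k) : ℝ) / 2 ^ (2 * k) - c (2 * (k + 1)) / 2 ^ (2 * (k + 1)) =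
      -(((#(periodFree (2 * k + 1) 1) : ℝ) - 4 * #(periodFree (2 * k - 1) 1)) /
        2 ^ (2 * k + 1)) := by
    rw [c_two_mul (by omega), c_two_mul (by omega), show 2 * (k + 1) - 1 = 2 * k + 1 by omega]
    push_cast
    field_simp
    ring
  rw [Real.dist_eq, hsub, abs_neg, abs_div, abs_of_pos (by positivity : (0 : ℝ) < 2 ^ (2 * k + 1))]
  calc _ ≤ (2 : ℝ) ^ (k / 2 + 1) / 2 ^ (2 * k + 1) := by
        gcongr
        exact abs_card_periodFree_two_mul_add_one_sub_le hk
    _ = (2 : ℝ) ^ (((k / 2 : ℕ) : ℝ) - 2 * k) := by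
        rw [Real.rpow_sub two_pos, ← Real.rpow_natCast, ← Real.rpow_natCast]
        push_cast
        rw [Real.rpow_add two_pos, Real.rpow_add two_pos]
        field_simp
    _ ≤ (2 : ℝ) ^ (-(3 / 2 : ℝ) * k) :=
        Real.rpow_le_rpow_of_exponent_le one_le_two
          (by linarith [Nat.cast_div_le (α := ℝ) (m := k) (n := 2)])
    _ = _ := by rw [Real.rpow_mul two_pos.le, Real.rpow_natCast]

end Penney

open Filter in
/-- If `α = lim c_n / 2^n`, then `|c_{2m}/2^{2m} - α| ≤ K · 2^{-(3/2)m}` for all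
`m ≥ 4`, for some constant `K > 0`. -/
theorem dn_asymptotic_even (α : ℝ)
    (hα : Tendsto (fun n : ℕ => (c n : ℝ) / 2 ^ n) atTop (nhds α)) :
    ∃ K : ℝ, 0 < K ∧ ∀ m : ℕ, 4 ≤ m →
      |(c (2 * m) : ℝ) / 2 ^ (2 * m) - α| ≤ K * (2 : ℝ) ^ (-(3 / 2 : ℝ) * (m : ℝ)) := by
  set r : ℝ := 2 ^ (-(3 / 2 : ℝ))
  have hr : r < 1 := Real.rpow_lt_one_of_one_lt_of_neg (by norm_num) (by norm_num)
  have hlim : Tendsto (fun k : ℕ => (c (2 * k) : ℝ) / 2 ^ (2 * k)) atTop (𝓝 α) :=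
    hα.comp (tendsto_id.const_mul_atTop' two_pos)
  refine ⟨(1 - r)⁻¹, inv_pos.2 (sub_pos.2 hr), fun m hm => ?_⟩
  have h := dist_le_of_forall_ge_le_geometric_of_tendsto hlim hr
    (fun k hk => Penney.dist_c_two_mul_div_le hk) hm
  have hrm : r ^ m = 2 ^ (-(3 / 2 : ℝ) * m) := by
    rw [← Real.rpow_natCast, ← Real.rpow_mul zero_le_two]
  rwa [Real.dist_eq, hrm, div_eq_inv_mul _ (1 - r)] at h
end

section
/- There exist a strictly positive real constant α (namely α = lim_{n→∞} c_n/2^n) and a constant K > 0 such that for all sufficiently large n: if n is even then |c_n − α·2^n| ≤ K·2^{n/4}, and if n is odd then |c_n − α·(2^n + 2^{⌊n/2⌋+1})| ≤ K·2^{n/4}. In particular, c_n/2^n → α as n → ∞, so asymptotically a fixed proportion α of all 2^n head/tail strings of length n are optimal strategies for Player I. -/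
/-!
Write `good` for a word that begins with `HT`, ends with `TH` and has no border (a proper
prefix that is also a suffix) of length at least two. The autocorrelation of a word beginning
and ending with `H` is `2^{m-1} + 1` exactly when its only borders have lengths `1` and `m`,
so `c*_m` counts the good words of length `m`.

Inserting a letter in the middle of a good word, or deleting its middle letter, keeps it good,
except for the words `u T u'` and `u u'`, where `u` is good and `u'` is `u` without its first
letter. Counting these exceptions gives, for `k ≥ 3`,
`c*_{2k} = 2 c*_{2k-1} + c*_k` and `2 c*_{2k} = c*_{2k+1} + c*_{k+1}`.

Consequently `a_k = c*_{2k+1} / 2^{2k+1}` has increments `(2 c*_{k+1} - c*_{k+2}) / 2^{2k+3}`,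
whose numerator is `± c*` of an index near `k / 2`, hence `O(2^{-3k/2})`. So `a_k → α`
geometrically, `|c*_{2k+1} - α 2^{2k+1}| = O(2^{k/2})`, and the second recurrence carries this
to even indices; for odd `n` it also produces the correction term `α 2^{⌊n/2⌋+1}`. The value
`c*_9 = 21` with the explicit tail bound shows `α > 0`.
-/

open Filter Topology Set

namespace PenneyAnte

variable {m n k ℓ p : ℕ} {x : Bool} {u w : ℕ → Bool}

/-! ### Borders and good words -/

/-- A word of length `m` is modelled by `w : ℕ → Bool`, of which only `w 0, …, w (m - 1)`
matter. -/
def HasBorder (m ℓ : ℕ) (w : ℕ → Bool) : Prop := ∀ i < ℓ, w i = w (m - ℓ + i)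

instance (m ℓ : ℕ) (w : ℕ → Bool) : Decidable (HasBorder m ℓ w) := by
  unfold HasBorder; infer_instance

structure IsGood (m : ℕ) (w : ℕ → Bool) : Prop where
  zero : w 0 = true
  one : w 1 = false
  sub_two : w (m - 2) = false
  sub_one : w (m - 1) = true
  not_hasBorder : ∀ ℓ, 2 ≤ ℓ → ℓ < m → ¬ HasBorder m ℓ w

theorem HasBorder.two_mul_sub (hℓ : ℓ < m) (hb : HasBorder m ℓ w) :
    HasBorder m (2 * ℓ - m) w := by
  intro i hi
  rw [hb i (by omega), hb (m - ℓ + i) (by omega)]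
  congr 1
  omega

theorem HasBorder.exists_short (h2 : 2 ≤ ℓ) (hℓ : ℓ < m) (hb : HasBorder m ℓ w) :
    ∃ ℓ', 2 ≤ ℓ' ∧ 2 * ℓ' ≤ m + 1 ∧ HasBorder m ℓ' w := by
  induction ℓ using Nat.strong_induction_on with
  | _ ℓ ih =>
    by_cases hshort : 2 * ℓ ≤ m + 1
    · exact ⟨ℓ, h2, hshort, hb⟩
    · exact ih (2 * ℓ - m) (by omega) (by omega) (by omega) (hb.two_mul_sub hℓ)

theorem isGood_iff (h0 : w 0 = true) (h1 : w 1 = false) (h2 : w (m - 2) = false)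
    (h3 : w (m - 1) = true) :
    IsGood m w ↔ ∀ ℓ, 2 ≤ ℓ → 2 * ℓ ≤ m + 1 → ¬ HasBorder m ℓ w := by
  refine ⟨fun hw ℓ hℓ hshort => hw.not_hasBorder ℓ hℓ (by omega), fun h => ⟨h0, h1, h2, h3, ?_⟩⟩
  intro ℓ hℓ hlt hb
  obtain ⟨ℓ', hℓ', hshort, hb'⟩ := hb.exists_short hℓ hlt
  exact h ℓ' hℓ' hshort hb'

/-! ### `c*_m` counts good words -/

/-- Words of length `m`: the functions `ℕ → Bool` vanishing from position `m` on. -/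
def words (m : ℕ) : Set (ℕ → Bool) := {w | ∀ i, m ≤ i → w i = false}

def goodWords (m : ℕ) : Set (ℕ → Bool) := {w | w ∈ words m ∧ IsGood m w}

def ofFin {m : ℕ} (A : Fin m → Bool) : ℕ → Bool :=
  fun i => if h : i < m then A ⟨i, h⟩ else false

theorem ofFin_injective : Function.Injective (ofFin (m := m)) := by
  intro A B h
  funext i
  simpa [ofFin, i.isLt] using congrFun h i

theorem range_ofFin : range (ofFin (m := m)) = words m := by
  ext w
  constructor
  · rintro ⟨A, rfl⟩ i hi
    simp [ofFin, show ¬ i < m by omega]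
  · intro hw
    refine ⟨fun i => w i, funext fun i => ?_⟩
    by_cases hi : i < m
    · simp [ofFin, hi]
    · simp [ofFin, hi, hw i (by omega)]

theorem words_finite (m : ℕ) : (words m).Finite := range_ofFin ▸ finite_range _

theorem goodWords_finite (m : ℕ) : (goodWords m).Finite :=
  (words_finite m).subset fun _ h => h.1

theorem eq_of_mem_words {v : ℕ → Bool} (hv : v ∈ words m) (hw : w ∈ words m)
    (h : ∀ i < m, v i = w i) : v = w := by
  funext i
  by_cases hi : i < m
  · exact h i hi
  · rw [hv i (by omega), hw i (by omega)]

theorem forall_val_eq_imp_iff {A : Fin m → Bool} {v : ℕ} (hv : v < m) (b : Bool) :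
    (∀ i : Fin m, (i : ℕ) = v → A i = b) ↔ ofFin A v = b :=
  ⟨fun h => by simpa [ofFin, hv] using h ⟨v, hv⟩ rfl,
    fun h i hi => by simpa [ofFin, ← hi] using h⟩

theorem forall_add_eq_iff_hasBorder (A : Fin m → Bool) (i : Fin m) :
    (∀ j : Fin m, (i : ℕ) + j < m → A (i + j) = A j) ↔ HasBorder m (m - i) (ofFin A) := by
  have hadd (j : Fin m) (h : (i : ℕ) + j < m) : i + j = ⟨i + j, h⟩ :=
    Fin.ext (by simp [Fin.add_def, Nat.mod_eq_of_lt h])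
  rw [HasBorder, show m - (m - i) = (i : ℕ) by omega]
  constructor
  · intro h j hj
    have e := h ⟨j, by omega⟩ (by simp only; omega)
    rw [hadd _ (by simp only; omega)] at e
    simp [ofFin, e, show j < m by omega, show (i : ℕ) + j < m by omega]
  · intro h j hj
    simpa [ofFin, hadd j hj, hj] using (h j (by omega)).symm

theorem conway_self_eq_sum (A : Fin m → Bool) :
    conway A A = ∑ j ∈ Finset.range m, if HasBorder m (j + 1) (ofFin A) then 2 ^ j else 0 := by
  rw [← Finset.sum_range_reflect, conway, ← Fin.sum_univ_eq_sum_range]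
  refine Finset.sum_congr rfl fun i _ => ?_
  rw [show m - 1 - i + 1 = m - i by omega]
  exact if_congr (forall_add_eq_iff_hasBorder A i) rfl rfl

theorem sum_hasBorder_eq_iff (hm : 2 ≤ m) (h : w 0 = w (m - 1)) :
    ∑ j ∈ Finset.range m, (if HasBorder m (j + 1) w then 2 ^ j else 0) = 2 ^ (m - 1) + 1 ↔
      ∀ ℓ, 2 ≤ ℓ → ℓ < m → ¬ HasBorder m ℓ w := by
  obtain ⟨n, rfl⟩ : ∃ n, m = n + 2 := ⟨m - 2, by omega⟩
  have hfull : HasBorder (n + 2) (n + 1 + 1) w := fun i _ => by simp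
  have hone : HasBorder (n + 2) (0 + 1) w := fun i hi => by
    obtain rfl : i = 0 := by omega
    simpa using h
  rw [Finset.sum_range_succ, Finset.sum_range_succ', if_pos hfull, if_pos hone,
    show n + 2 - 1 = n + 1 by omega, pow_zero, add_comm _ (2 ^ (n + 1)), add_left_cancel_iff,
    add_eq_right, Finset.sum_eq_zero_iff]
  simp only [Finset.mem_range, ite_eq_right_iff, pow_eq_zero_iff', OfNat.ofNat_ne_zero, false_and,
    imp_false]
  refine ⟨fun h ℓ h2 hlt => ?_, fun h j hj => h (j + 2) (by omega) (by omega)⟩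
  simpa [show ℓ - 2 + 1 + 1 = ℓ by omega] using h (ℓ - 2) (by omega)

theorem cstar_eq_ncard (hm : 3 ≤ m) : cstar m = (goodWords m).ncard := by
  have hgood (A : Fin m → Bool) :
      ((∀ i : Fin m, (i : ℕ) = 0 → A i = true) ∧ (∀ i : Fin m, (i : ℕ) = 1 → A i = false) ∧
        (∀ i : Fin m, (i : ℕ) = m - 2 → A i = false) ∧
        (∀ i : Fin m, (i : ℕ) = m - 1 → A i = true) ∧ conway A A = 2 ^ (m - 1) + 1) ↔
      IsGood m (ofFin A) := by
    simp only [forall_val_eq_imp_iff (show 0 < m by omega),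
      forall_val_eq_imp_iff (show 1 < m by omega), forall_val_eq_imp_iff (show m - 2 < m by omega),
      forall_val_eq_imp_iff (show m - 1 < m by omega), conway_self_eq_sum]
    constructor
    · rintro ⟨h0, h1, h2, h3, hc⟩
      exact ⟨h0, h1, h2, h3, (sum_hasBorder_eq_iff (by omega) (h0.trans h3.symm)).mp hc⟩
    · rintro ⟨h0, h1, h2, h3, hb⟩
      exact ⟨h0, h1, h2, h3, (sum_hasBorder_eq_iff (by omega) (h0.trans h3.symm)).mpr hb⟩
  have himage : goodWords m = ofFin '' {A : Fin m → Bool | IsGood m (ofFin A)} := by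
    ext w
    constructor
    · rintro ⟨hw, hg⟩
      obtain ⟨A, rfl⟩ : w ∈ range ofFin := range_ofFin ▸ hw
      exact ⟨A, hg, rfl⟩
    · rintro ⟨A, hA, rfl⟩
      exact ⟨range_ofFin ▸ mem_range_self A, hA⟩
  rw [himage, ncard_image_of_injective _ ofFin_injective, ← Nat.card_coe_set_eq, cstar,
    ← Nat.card_eq_fintype_card]
  exact Nat.card_congr (Equiv.subtypeEquivRight hgood)

/-! ### Cutting and gluing words -/

def insertAt (k : ℕ) (x : Bool) (w : ℕ → Bool) : ℕ → Bool :=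
  fun i => if i < k then w i else if i = k then x else w (i - 1)

def eraseAt (k : ℕ) (w : ℕ → Bool) : ℕ → Bool := fun i => if i < k then w i else w (i + 1)

/-- The first `k` letters of `u` followed by `u` without its first letter. -/
def glue (k : ℕ) (u : ℕ → Bool) : ℕ → Bool := fun i => if i < k then u i else u (i + 1 - k)

def truncate (m : ℕ) (w : ℕ → Bool) : ℕ → Bool := fun i => if i < m then w i else false

@[simp] theorem insertAt_of_lt {i : ℕ} (h : i < k) : insertAt k x w i = w i := if_pos h

@[simp] theorem insertAt_self : insertAt k x w k = x := by simp [insertAt]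

theorem insertAt_of_gt {i : ℕ} (h : k < i) : insertAt k x w i = w (i - 1) := by
  simp [insertAt, show ¬ i < k by omega, show i ≠ k by omega]

@[simp] theorem eraseAt_of_lt {i : ℕ} (h : i < k) : eraseAt k w i = w i := if_pos h

theorem eraseAt_of_le {i : ℕ} (h : k ≤ i) : eraseAt k w i = w (i + 1) := if_neg (by omega)

@[simp] theorem glue_of_lt {i : ℕ} (h : i < k) : glue k u i = u i := if_pos h

theorem glue_of_le {i : ℕ} (h : k ≤ i) : glue k u i = u (i + 1 - k) := if_neg (by omega)

@[simp] theorem eraseAt_insertAt : eraseAt k (insertAt k x w) = w := by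
  funext i
  rcases lt_or_ge i k with h | h
  · simp [h]
  · rw [eraseAt_of_le h, insertAt_of_gt (by omega), Nat.add_sub_cancel]

@[simp] theorem insertAt_eraseAt : insertAt k (w k) (eraseAt k w) = w := by
  funext i
  rcases lt_trichotomy i k with h | rfl | h
  · simp [h]
  · simp
  · rw [insertAt_of_gt h, eraseAt_of_le (by omega), Nat.sub_add_cancel (by omega)]

theorem glue_succ : glue (k + 1) u = insertAt k (u k) (glue k u) := by
  funext i
  rcases lt_trichotomy i k with h | rfl | h
  · simp [h, show i < k + 1 by omega]
  · simp
  · rw [insertAt_of_gt h, glue_of_le (by omega), glue_of_le (by omega)]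
    congr 1
    omega

theorem insertAt_injective :
    Function.Injective fun q : Bool × (ℕ → Bool) => insertAt k q.1 q.2 := by
  rintro ⟨x, v⟩ ⟨y, w⟩ h
  have hx : x = y := by simpa using congrFun h k
  have hv : v = w := by simpa using congrArg (eraseAt k) h
  rw [hx, hv]

theorem glue_injOn : InjOn (glue k) (words k) := fun u hu v hv h =>
  eq_of_mem_words hu hv fun i hi => by simpa [hi] using congrFun h i

theorem insertAt_mem_words (hn : m + 1 = n) (hk : k ≤ m) (hw : w ∈ words m) :
    insertAt k x w ∈ words n := fun i hi => by
  rw [insertAt_of_gt (by omega), hw _ (by omega)]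

theorem eraseAt_mem_words (hn : m + 1 = n) (hk : k ≤ m) (hw : w ∈ words n) :
    eraseAt k w ∈ words m := fun i hi => by
  rw [eraseAt_of_le (by omega), hw _ (by omega)]

theorem glue_mem_words (hn : n + 1 = k + p) (hk : 1 ≤ k) (hu : u ∈ words p) :
    glue k u ∈ words n := fun i hi => by
  unfold glue
  split_ifs <;> exact hu _ (by omega)

theorem truncate_mem_words : truncate m w ∈ words m := fun i hi => by
  simp [truncate, show ¬ i < m by omega]

theorem eq_glue_truncate (hw : w ∈ words n) (hn : n + 1 = k + p) (hk : 1 ≤ k) (hkp : k ≤ p)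
    (hb : HasBorder n p w) : w = glue k (truncate p w) := by
  refine eq_of_mem_words hw (glue_mem_words hn hk truncate_mem_words) fun i hi => ?_
  rcases lt_or_ge i k with hik | hik
  · simp [hik, truncate, show i < p by omega]
  · have hlt : i + 1 - k < p := by omega
    rw [glue_of_le hik, truncate, if_pos hlt, hb _ hlt]
    congr 1
    omega

theorem hasBorder_insertAt_iff (hn : m + 1 = n) (hℓk : ℓ ≤ k) (hkm : k + ℓ ≤ m) :
    HasBorder n ℓ (insertAt k x w) ↔ HasBorder m ℓ w := by
  refine forall₂_congr fun i hi => ?_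
  rw [insertAt_of_lt (by omega), insertAt_of_gt (by omega),
    show n - ℓ + i - 1 = m - ℓ + i by omega]

theorem hasBorder_glue_iff (hn : n + 1 = k + p) (hℓk : ℓ ≤ k) (hℓp : ℓ < p) :
    HasBorder n ℓ (glue k u) ↔ HasBorder p ℓ u := by
  refine forall₂_congr fun i hi => ?_
  rw [glue_of_lt (by omega), glue_of_le (by omega), show n - ℓ + i + 1 - k = p - ℓ + i by omega]

theorem hasBorder_glue_self (hn : n + 1 = 2 * k) (hu : u 0 = u (k - 1)) :
    HasBorder n k (glue k u) := by
  intro i hi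
  rw [glue_of_lt hi]
  rcases Nat.eq_zero_or_pos i with rfl | hpos
  · rw [hu, glue_of_lt (by omega)]
    congr 1
    omega
  · rw [glue_of_le (by omega)]
    congr 1
    omega

theorem not_isGood_glue_self (hn : n + 1 = 2 * k) (hk : 2 ≤ k) (hu : u 0 = u (k - 1)) :
    ¬ IsGood n (glue k u) :=
  fun h => h.not_hasBorder k hk (by omega) (hasBorder_glue_self hn hu)

/-! ### The two recurrences -/

theorem IsGood.insertAt_middle (hk : 3 ≤ k) (hw : IsGood (2 * k - 1) w) (x : Bool) :
    IsGood (2 * k) (insertAt k x w) := by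
  rw [isGood_iff (by simp [show 0 < k by omega, hw.zero]) (by simp [show 1 < k by omega, hw.one])
    (by rw [insertAt_of_gt (by omega), show 2 * k - 2 - 1 = 2 * k - 1 - 2 by omega, hw.sub_two])
    (by rw [insertAt_of_gt (by omega), hw.sub_one])]
  intro ℓ h2 hshort hb
  rcases (by omega : ℓ < k ∨ ℓ = k) with hlt | rfl
  · exact hw.not_hasBorder ℓ h2 (by omega)
      ((hasBorder_insertAt_iff (by omega) hlt.le (by omega)).mp hb)
  · -- this border passes over the inserted letter, and yields a border of `w` of the same length
    refine hw.not_hasBorder ℓ h2 (by omega) fun i hi => ?_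
    rcases Nat.eq_zero_or_pos i with rfl | hpos
    · have e := hb (ℓ - 1) (by omega)
      rw [insertAt_of_lt (by omega), insertAt_of_gt (by omega)] at e
      rw [hw.zero, ← hw.sub_one, show 2 * ℓ - 1 - ℓ + 0 = ℓ - 1 by omega, e]
      congr 1
      omega
    · have e := hb i hi
      rw [insertAt_of_lt hi, insertAt_of_gt (by omega)] at e
      rw [e]
      congr 1
      omega

theorem IsGood.eraseAt_middle (hk : 2 ≤ k) (hw : IsGood (2 * k + 1) w) :
    IsGood (2 * k) (eraseAt k w) := by
  rw [isGood_iff (by simp [show 0 < k by omega, hw.zero]) (by simp [show 1 < k by omega, hw.one])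
    (by rw [eraseAt_of_le (by omega), show 2 * k - 2 + 1 = 2 * k + 1 - 2 by omega, hw.sub_two])
    (by rw [eraseAt_of_le (by omega), show 2 * k - 1 + 1 = 2 * k + 1 - 1 by omega, hw.sub_one])]
  intro ℓ h2 hshort hb
  have hb' := (hasBorder_insertAt_iff (k := k) (x := w k) (m := 2 * k) rfl (by omega)
    (by omega)).mpr hb
  rw [insertAt_eraseAt] at hb'
  exact hw.not_hasBorder ℓ h2 (by omega) hb'

theorem isGood_glue_iff (hk : 2 ≤ k) : IsGood (2 * k) (glue k u) ↔ IsGood (k + 1) u := by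
  have e0 : glue k u 0 = u 0 := glue_of_lt (by omega)
  have e1 : glue k u 1 = u 1 := glue_of_lt (by omega)
  have e2 : glue k u (2 * k - 2) = u (k + 1 - 2) := by
    rw [glue_of_le (by omega)]
    congr 1
    omega
  have e3 : glue k u (2 * k - 1) = u (k + 1 - 1) := by
    rw [glue_of_le (by omega)]
    congr 1
    omega
  have hborder (ℓ : ℕ) (hℓ : ℓ ≤ k) : HasBorder (2 * k) ℓ (glue k u) ↔ HasBorder (k + 1) ℓ u :=
    hasBorder_glue_iff (by omega) hℓ (by omega)
  constructor
  · intro h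
    refine ⟨e0 ▸ h.zero, e1 ▸ h.one, e2 ▸ h.sub_two, e3 ▸ h.sub_one, fun ℓ h2 hlt hb => ?_⟩
    exact h.not_hasBorder ℓ h2 (by omega) ((hborder ℓ (by omega)).mpr hb)
  · intro h
    rw [isGood_iff (e0 ▸ h.zero) (e1 ▸ h.one) (e2 ▸ h.sub_two) (e3 ▸ h.sub_one)]
    exact fun ℓ h2 hshort hb => h.not_hasBorder ℓ h2 (by omega) ((hborder ℓ (by omega)).mp hb)

theorem isGood_insertAt_glue_iff (hk : 3 ≤ k) :
    IsGood (2 * k) (insertAt k false (glue k u)) ↔ IsGood k u := by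
  have e0 : insertAt k false (glue k u) 0 = u 0 := by simp [show 0 < k by omega]
  have e1 : insertAt k false (glue k u) 1 = u 1 := by simp [show 1 < k by omega]
  have e2 : insertAt k false (glue k u) (2 * k - 2) = u (k - 2) := by
    rw [insertAt_of_gt (by omega), glue_of_le (by omega)]
    congr 1
    omega
  have e3 : insertAt k false (glue k u) (2 * k - 1) = u (k - 1) := by
    rw [insertAt_of_gt (by omega), glue_of_le (by omega)]
    congr 1
    omega
  have hborder (ℓ : ℕ) (hℓ : ℓ < k) :
      HasBorder (2 * k) ℓ (insertAt k false (glue k u)) ↔ HasBorder k ℓ u :=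
    (hasBorder_insertAt_iff (m := 2 * k - 1) (by omega) hℓ.le (by omega)).trans
      (hasBorder_glue_iff (by omega) hℓ.le hℓ)
  constructor
  · intro h
    refine ⟨e0 ▸ h.zero, e1 ▸ h.one, e2 ▸ h.sub_two, e3 ▸ h.sub_one, fun ℓ h2 hlt hb => ?_⟩
    exact h.not_hasBorder ℓ h2 (by omega) ((hborder ℓ hlt).mpr hb)
  · intro h
    rw [isGood_iff (e0 ▸ h.zero) (e1 ▸ h.one) (e2 ▸ h.sub_two) (e3 ▸ h.sub_one)]
    intro ℓ h2 hshort hb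
    rcases (by omega : ℓ < k ∨ ℓ = k) with hlt | rfl
    · exact h.not_hasBorder ℓ h2 hlt ((hborder ℓ hlt).mp hb)
    · -- the inserted letter `false` would face the first letter `true`
      have e := hb 0 (by omega)
      rw [e0, h.zero, show 2 * ℓ - ℓ + 0 = ℓ by omega] at e
      simp at e

theorem exists_eq_insertAt_glue (hk : 3 ≤ k) (hw : w ∈ goodWords (2 * k))
    (hv : ¬ IsGood (2 * k - 1) (eraseAt k w)) :
    ∃ u ∈ goodWords k, w = insertAt k false (glue k u) := by
  obtain ⟨hw, hgood⟩ := hw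
  have hins : insertAt k (w k) (eraseAt k w) = w := insertAt_eraseAt
  have hb : HasBorder (2 * k - 1) k (eraseAt k w) := by
    rw [isGood_iff (by simp [show 0 < k by omega, hgood.zero])
      (by simp [show 1 < k by omega, hgood.one])
      (by rw [eraseAt_of_le (by omega), show 2 * k - 1 - 2 + 1 = 2 * k - 2 by omega, hgood.sub_two])
      (by rw [eraseAt_of_le (by omega), show 2 * k - 1 - 1 + 1 = 2 * k - 1 by omega,
        hgood.sub_one])] at hv
    push Not at hv
    obtain ⟨ℓ, h2, hshort, hb⟩ := hv
    obtain rfl : ℓ = k := by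
      by_contra hne
      have hb' := (hasBorder_insertAt_iff (k := k) (x := w k) (n := 2 * k) (by omega) (by omega)
        (by omega)).mpr hb
      exact hgood.not_hasBorder ℓ h2 (by omega) (hins ▸ hb')
    exact hb
  have hwk : w k = false := by
    by_contra hwk
    refine hgood.not_hasBorder k (by omega) (by omega) fun i hi => ?_
    rcases Nat.eq_zero_or_pos i with rfl | hpos
    · rw [hgood.zero, show 2 * k - k + 0 = k by omega]
      simpa using hwk
    · have e := hb i hi
      rw [eraseAt_of_lt hi, eraseAt_of_le (by omega)] at e
      rw [e]
      congr 1
      omega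
  have hglue := eq_glue_truncate (eraseAt_mem_words (by omega) (by omega) hw) (by omega)
    (by omega) le_rfl hb
  refine ⟨truncate k (eraseAt k w), ⟨truncate_mem_words, ?_⟩, ?_⟩
  · rw [← isGood_insertAt_glue_iff hk, ← hglue, ← hwk, hins]
    exact hgood
  · rw [← hglue, ← hwk, hins]

theorem exists_eq_glue (hk : 2 ≤ k) (hw : w ∈ goodWords (2 * k))
    (hx : ¬ IsGood (2 * k + 1) (insertAt k x w)) :
    ∃ u ∈ goodWords (k + 1), insertAt k x w = glue (k + 1) u := by
  obtain ⟨hw, hgood⟩ := hw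
  have hb : HasBorder (2 * k + 1) (k + 1) (insertAt k x w) := by
    rw [isGood_iff (by simp [show 0 < k by omega, hgood.zero])
      (by simp [show 1 < k by omega, hgood.one])
      (by rw [insertAt_of_gt (by omega), show 2 * k + 1 - 2 - 1 = 2 * k - 2 by omega,
        hgood.sub_two])
      (by rw [insertAt_of_gt (by omega), show 2 * k + 1 - 1 - 1 = 2 * k - 1 by omega,
        hgood.sub_one])] at hx
    push Not at hx
    obtain ⟨ℓ, h2, hshort, hb⟩ := hx
    obtain rfl : ℓ = k + 1 := by
      by_contra hne
      exact hgood.not_hasBorder ℓ h2 (by omega)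
        ((hasBorder_insertAt_iff rfl (by omega) (by omega)).mp hb)
    exact hb
  have hglue := eq_glue_truncate (insertAt_mem_words rfl (by omega) hw) (by omega) (by omega)
    le_rfl hb
  refine ⟨_, ⟨truncate_mem_words, ?_⟩, hglue⟩
  have hw' : glue k (truncate (k + 1) (insertAt k x w)) = w := by
    simpa [glue_succ] using (congrArg (eraseAt k) hglue).symm
  rw [← isGood_glue_iff hk, hw']
  exact hgood

theorem ncard_goodWords_two_mul (hk : 3 ≤ k) :
    (goodWords (2 * k)).ncard = 2 * (goodWords (2 * k - 1)).ncard + (goodWords k).ncard := by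
  set ins : Bool × (ℕ → Bool) → ℕ → Bool := fun q => insertAt k q.1 q.2
  set dbl : (ℕ → Bool) → ℕ → Bool := fun u => insertAt k false (glue k u)
  have hsplit :
      goodWords (2 * k) = ins '' (univ ×ˢ goodWords (2 * k - 1)) ∪ dbl '' goodWords k := by
    ext w
    constructor
    · intro hw
      by_cases hv : IsGood (2 * k - 1) (eraseAt k w)
      · exact Or.inl ⟨(w k, eraseAt k w),
          ⟨trivial, eraseAt_mem_words (by omega) (by omega) hw.1, hv⟩, insertAt_eraseAt⟩
      · obtain ⟨u, hu, rfl⟩ := exists_eq_insertAt_glue hk hw hv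
        exact Or.inr ⟨u, hu, rfl⟩
    · rintro (⟨⟨x, v⟩, ⟨-, hv⟩, rfl⟩ | ⟨u, hu, rfl⟩)
      · exact ⟨insertAt_mem_words (by omega) (by omega) hv.1, hv.2.insertAt_middle hk x⟩
      · exact ⟨insertAt_mem_words (by omega) (by omega)
          (glue_mem_words (n := 2 * k - 1) (by omega) (by omega) hu.1),
          (isGood_insertAt_glue_iff hk).mpr hu.2⟩
  have hdisj : Disjoint (ins '' (univ ×ˢ goodWords (2 * k - 1))) (dbl '' goodWords k) := by
    rw [disjoint_left]
    rintro _ ⟨⟨x, v⟩, ⟨-, hv⟩, rfl⟩ ⟨u, hu, h⟩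
    have huv : glue k u = v := by simpa [ins, dbl] using congrArg (eraseAt k) h
    exact not_isGood_glue_self (by omega) (by omega) (hu.2.zero.trans hu.2.sub_one.symm)
      (huv ▸ hv.2)
  have hdbl : InjOn dbl (goodWords k) := fun u hu v hv h =>
    glue_injOn hu.1 hv.1 (by simpa [dbl] using congrArg (eraseAt k) h)
  rw [hsplit, ncard_union_eq hdisj ((finite_univ.prod (goodWords_finite _)).image _)
    ((goodWords_finite _).image _), ncard_image_of_injective _ insertAt_injective, ncard_prod,
    ncard_univ, Nat.card_eq_fintype_card, Fintype.card_bool, hdbl.ncard_image]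

theorem two_mul_ncard_goodWords_two_mul (hk : 2 ≤ k) :
    2 * (goodWords (2 * k)).ncard =
      (goodWords (2 * k + 1)).ncard + (goodWords (k + 1)).ncard := by
  set ins : Bool × (ℕ → Bool) → ℕ → Bool := fun q => insertAt k q.1 q.2
  have hsplit : ins '' (univ ×ˢ goodWords (2 * k)) =
      goodWords (2 * k + 1) ∪ glue (k + 1) '' goodWords (k + 1) := by
    ext w
    constructor
    · rintro ⟨⟨x, v⟩, ⟨-, hv⟩, rfl⟩
      by_cases hw : IsGood (2 * k + 1) (insertAt k x v)
      · exact Or.inl ⟨insertAt_mem_words rfl (by omega) hv.1, hw⟩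
      · obtain ⟨u, hu, h⟩ := exists_eq_glue hk hv hw
        exact Or.inr ⟨u, hu, h.symm⟩
    · rintro (hw | ⟨u, hu, rfl⟩)
      · exact ⟨(w k, eraseAt k w), ⟨trivial, eraseAt_mem_words rfl (by omega) hw.1,
          hw.2.eraseAt_middle hk⟩, insertAt_eraseAt⟩
      · exact ⟨(u k, glue k u), ⟨trivial, glue_mem_words (by omega) (by omega) hu.1,
          (isGood_glue_iff hk).mpr hu.2⟩, glue_succ.symm⟩
  have hdisj : Disjoint (goodWords (2 * k + 1)) (glue (k + 1) '' goodWords (k + 1)) := by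
    rw [disjoint_left]
    rintro _ hw ⟨u, hu, rfl⟩
    exact not_isGood_glue_self (by omega) (by omega) (hu.2.zero.trans hu.2.sub_one.symm) hw.2
  have hcard := congrArg ncard hsplit
  rwa [ncard_image_of_injective _ insertAt_injective, ncard_prod, ncard_univ,
    Nat.card_eq_fintype_card, Fintype.card_bool, ncard_union_eq hdisj (goodWords_finite _)
    ((goodWords_finite _).image _), (glue_injOn.mono fun _ h => h.1).ncard_image] at hcard

theorem cstar_two_mul (hk : 3 ≤ k) : cstar (2 * k) = 2 * cstar (2 * k - 1) + cstar k := by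
  rw [cstar_eq_ncard (by omega), cstar_eq_ncard (by omega), cstar_eq_ncard hk,
    ncard_goodWords_two_mul hk]

theorem two_mul_cstar_two_mul (hk : 2 ≤ k) :
    2 * cstar (2 * k) = cstar (2 * k + 1) + cstar (k + 1) := by
  rw [cstar_eq_ncard (by omega), cstar_eq_ncard (by omega), cstar_eq_ncard (by omega),
    two_mul_ncard_goodWords_two_mul hk]

theorem cstar_nine : cstar 9 = 21 := by
  have h3 : cstar 3 = 1 := by decide
  have h4 : cstar 4 = 1 := by decide
  have h5 := two_mul_cstar_two_mul (k := 2) le_rfl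
  have h6 := cstar_two_mul (k := 3) le_rfl
  have h7 := two_mul_cstar_two_mul (k := 3) (by norm_num)
  have h8 := cstar_two_mul (k := 4) (by norm_num)
  have h9 := two_mul_cstar_two_mul (k := 4) (by norm_num)
  norm_num at h5 h6 h7 h8 h9
  omega

theorem cstar_le (m : ℕ) : cstar m ≤ 2 ^ m :=
  (Fintype.card_subtype_le _).trans (by simp)

/-! ### Asymptotics -/

theorem exists_abs_sub_le_of_abs_sub_le_geometric {u : ℕ → ℝ} {C ρ : ℝ} {N : ℕ} (hρ : ρ < 1)
    (hu : ∀ k, N ≤ k → |u (k + 1) - u k| ≤ C * ρ ^ k) :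
    ∃ α, ∀ k, N ≤ k → |u k - α| ≤ C * ρ ^ k / (1 - ρ) := by
  have hdist (n : ℕ) : dist (u (n + N)) (u (n + 1 + N)) ≤ C * ρ ^ N * ρ ^ n := by
    rw [Real.dist_eq, abs_sub_comm, show n + 1 + N = n + N + 1 by ring, mul_assoc, ← pow_add,
      add_comm N n]
    exact hu _ (by omega)
  obtain ⟨α, hα⟩ := cauchySeq_tendsto_of_complete (cauchySeq_of_le_geometric ρ _ hρ hdist)
  refine ⟨α, fun k hk => ?_⟩
  have h := dist_le_of_le_geometric_of_tendsto ρ _ hρ hdist hα (k - N)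
  rwa [Real.dist_eq, Nat.sub_add_cancel hk, mul_assoc, ← pow_add, Nat.add_sub_cancel' hk] at h

theorem sqrt_two_pow_two_mul (t : ℕ) : √2 ^ (2 * t) = 2 ^ t := by
  rw [pow_mul, Real.sq_sqrt zero_le_two]

theorem sqrt_two_pow_le_two_rpow (h : 2 * k ≤ n) : √2 ^ k ≤ (2 : ℝ) ^ ((n : ℝ) / 4) := by
  rw [Real.sqrt_eq_rpow, ← Real.rpow_natCast, ← Real.rpow_mul zero_le_two]
  refine Real.rpow_le_rpow_of_exponent_le one_le_two ?_
  have : (2 * k : ℝ) ≤ n := by exact_mod_cast h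
  linarith

/-- One of the two recurrences, at index `⌊k / 2⌋ + 1`, turns this combination into `± c*` of an
index near `k / 2`. -/
theorem abs_two_mul_cstar_sub_cstar_le (hk : 3 ≤ k) :
    |2 * (cstar (k + 1) : ℝ) - cstar (k + 2)| ≤ 4 * √2 ^ k := by
  have hs := Real.sqrt_two_lt_three_halves
  rcases Nat.even_or_odd' k with ⟨t, rfl | rfl⟩
  · have h := cstar_two_mul (k := t + 1) (by omega)
    rw [show 2 * (t + 1) = 2 * t + 2 by ring, show 2 * t + 2 - 1 = 2 * t + 1 by omega] at h
    have e : 2 * (cstar (2 * t + 1) : ℝ) - cstar (2 * t + 2) = -cstar (t + 1) := by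
      rw [h]; push_cast; ring
    rw [e, abs_neg, Nat.abs_cast]
    calc (cstar (t + 1) : ℝ) ≤ 2 ^ (t + 1) := by exact_mod_cast cstar_le _
      _ ≤ 4 * √2 ^ (2 * t) := by
        rw [sqrt_two_pow_two_mul, pow_succ]; linarith [pow_pos (two_pos (α := ℝ)) t]
  · have h := two_mul_cstar_two_mul (k := t + 1) (by omega)
    rw [show 2 * (t + 1) = 2 * t + 1 + 1 by ring, show 2 * t + 1 + 1 + 1 = 2 * t + 1 + 2 by ring,
      show t + 1 + 1 = t + 2 by ring] at h
    have e : 2 * (cstar (2 * t + 1 + 1) : ℝ) - cstar (2 * t + 1 + 2) = cstar (t + 2) := by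
      rw [← Nat.cast_ofNat, ← Nat.cast_mul, h]; push_cast; ring
    rw [e, Nat.abs_cast]
    calc (cstar (t + 2) : ℝ) ≤ 2 ^ (t + 2) := by exact_mod_cast cstar_le _
      _ = 2 * (√2 * √2) * √2 ^ (2 * t) := by
        rw [Real.mul_self_sqrt zero_le_two, sqrt_two_pow_two_mul]; ring
      _ = 2 * √2 * √2 ^ (2 * t + 1) := by ring
      _ ≤ 4 * √2 ^ (2 * t + 1) := by gcongr; linarith

noncomputable def density (m : ℕ) : ℝ := cstar m / 2 ^ m

theorem abs_density_odd_succ_sub_le (hk : 4 ≤ k) :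
    |density (2 * (k + 1) + 1) - density (2 * k + 1)| ≤ 1 / 2 * (√2 / 4) ^ k := by
  have hrec : (cstar (2 * k + 3) : ℝ) =
      4 * cstar (2 * k + 1) + 2 * cstar (k + 1) - cstar (k + 2) := by
    have h1 := cstar_two_mul (k := k + 1) (by omega)
    have h2 := two_mul_cstar_two_mul (k := k + 1) (by omega)
    simp only [show 2 * (k + 1) - 1 = 2 * k + 1 by omega,
      show 2 * (k + 1) + 1 = 2 * k + 3 by omega, show k + 1 + 1 = k + 2 by omega] at h1 h2
    rw [eq_sub_iff_add_eq]
    exact_mod_cast (by omega : cstar (2 * k + 3) + cstar (k + 2) =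
      4 * cstar (2 * k + 1) + 2 * cstar (k + 1))
  have e : density (2 * (k + 1) + 1) - density (2 * k + 1) =
      (2 * cstar (k + 1) - cstar (k + 2)) / 2 ^ (2 * k + 3) := by
    rw [density, density, show 2 * (k + 1) + 1 = 2 * k + 3 by ring, hrec,
      pow_add _ (2 * k + 1) 2]
    field_simp
    ring
  rw [e, abs_div, abs_of_pos (by positivity : (0 : ℝ) < 2 ^ (2 * k + 3)),
    div_le_iff₀ (by positivity)]
  calc _ ≤ 4 * √2 ^ k := abs_two_mul_cstar_sub_cstar_le (by omega)
    _ = 1 / 2 * (√2 / 4) ^ k * 2 ^ (2 * k + 3) := by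
      rw [div_pow, pow_add, pow_mul, show (2 : ℝ) ^ 2 = 4 by norm_num]
      field_simp
      norm_num

theorem exists_abs_density_odd_sub_le :
    ∃ α : ℝ, ∀ k, 4 ≤ k → |density (2 * k + 1) - α| ≤ (√2 / 4) ^ k := by
  have hρ : √2 / 4 < 1 / 2 := by linarith [Real.sqrt_two_lt_three_halves]
  obtain ⟨α, hα⟩ := exists_abs_sub_le_of_abs_sub_le_geometric (u := fun k => density (2 * k + 1))
    (by linarith) fun k hk => abs_density_odd_succ_sub_le hk
  refine ⟨α, fun k hk => (hα k hk).trans ?_⟩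
  rw [div_le_iff₀ (by linarith)]
  nlinarith [pow_nonneg (div_nonneg (Real.sqrt_nonneg 2) (by norm_num : (0 : ℝ) ≤ 4)) k]

theorem pos_of_abs_density_odd_sub_le {α : ℝ}
    (hα : ∀ k, 4 ≤ k → |density (2 * k + 1) - α| ≤ (√2 / 4) ^ k) : 0 < α := by
  have h := hα 4 le_rfl
  have h9 : density (2 * 4 + 1) = 21 / 512 := by norm_num [density, cstar_nine]
  have hρ : (√2 / 4) ^ 4 = 1 / 64 := by
    rw [div_pow, show 4 = 2 * 2 by rfl, sqrt_two_pow_two_mul]; norm_num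
  rw [h9, hρ] at h
  linarith [(abs_le.mp h).2]

theorem abs_cstar_odd_sub_le {α : ℝ}
    (hα : ∀ k, 4 ≤ k → |density (2 * k + 1) - α| ≤ (√2 / 4) ^ k) (hk : 4 ≤ k) :
    |(cstar (2 * k + 1) : ℝ) - α * 2 ^ (2 * k + 1)| ≤ 2 * √2 ^ k := by
  have e : (cstar (2 * k + 1) : ℝ) - α * 2 ^ (2 * k + 1) =
      (density (2 * k + 1) - α) * 2 ^ (2 * k + 1) := by
    rw [density, sub_mul, div_mul_cancel₀ _ (by positivity)]
  rw [e, abs_mul, abs_of_pos (by positivity : (0 : ℝ) < 2 ^ (2 * k + 1))]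
  calc _ ≤ (√2 / 4) ^ k * 2 ^ (2 * k + 1) := by gcongr; exact hα k hk
    _ = 2 * √2 ^ k := by
      rw [div_pow, pow_succ, pow_mul, show (2 : ℝ) ^ 2 = 4 by norm_num]
      field_simp

theorem abs_cstar_sub_le {α : ℝ}
    (hα : ∀ k, 4 ≤ k → |density (2 * k + 1) - α| ≤ (√2 / 4) ^ k) (hm : 8 ≤ m) :
    |(cstar m : ℝ) - α * 2 ^ m| ≤ 2 * √2 ^ m := by
  have hs : 1 ≤ √2 := Real.one_lt_sqrt_two.le
  rcases Nat.even_or_odd' m with ⟨j, rfl | rfl⟩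
  · have hrec : (2 * cstar (2 * j) : ℝ) = cstar (2 * j + 1) + cstar (j + 1) := by
      exact_mod_cast two_mul_cstar_two_mul (k := j) (by omega)
    have e : (cstar (2 * j) : ℝ) - α * 2 ^ (2 * j) =
        ((cstar (2 * j + 1) - α * 2 ^ (2 * j + 1)) + cstar (j + 1)) / 2 := by
      rw [pow_succ]; linarith
    rw [e, abs_div, abs_two, div_le_iff₀ two_pos]
    calc _ ≤ |(cstar (2 * j + 1) : ℝ) - α * 2 ^ (2 * j + 1)| + |(cstar (j + 1) : ℝ)| :=
          abs_add_le _ _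
      _ ≤ 2 * √2 ^ j + 2 * √2 ^ (2 * j) := by
          rw [Nat.abs_cast, sqrt_two_pow_two_mul, ← pow_succ']
          exact add_le_add (abs_cstar_odd_sub_le hα (by omega)) (by exact_mod_cast cstar_le _)
      _ ≤ 2 * √2 ^ (2 * j) * 2 := by
          have := pow_le_pow_right₀ hs (show j ≤ 2 * j by omega)
          linarith
  · exact (abs_cstar_odd_sub_le hα (by omega)).trans (by gcongr; omega)

theorem tendsto_density {α : ℝ}
    (hα : ∀ k, 4 ≤ k → |density (2 * k + 1) - α| ≤ (√2 / 4) ^ k) :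
    Tendsto density atTop (𝓝 α) := by
  have hlim : Tendsto (fun m : ℕ => 2 * (√2 / 2) ^ m) atTop (𝓝 0) := by
    simpa using (tendsto_pow_atTop_nhds_zero_of_lt_one (by positivity)
      (by linarith [Real.sqrt_two_lt_three_halves])).const_mul (2 : ℝ)
  refine tendsto_iff_norm_sub_tendsto_zero.mpr
    (squeeze_zero' (Eventually.of_forall fun _ => norm_nonneg _) ?_ hlim)
  filter_upwards [eventually_ge_atTop 8] with m hm
  have e : density m - α = ((cstar m : ℝ) - α * 2 ^ m) / 2 ^ m := by
    rw [density, sub_div, mul_div_cancel_right₀ _ (by positivity)]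
  rw [Real.norm_eq_abs, e, abs_div, abs_of_pos (by positivity : (0 : ℝ) < 2 ^ m),
    div_le_iff₀ (by positivity)]
  calc _ ≤ 2 * √2 ^ m := abs_cstar_sub_le hα hm
    _ = 2 * (√2 / 2) ^ m * 2 ^ m := by rw [div_pow]; field_simp

theorem tendsto_c_div_two_pow {α : ℝ}
    (hα : ∀ k, 4 ≤ k → |density (2 * k + 1) - α| ≤ (√2 / 4) ^ k) :
    Tendsto (fun n : ℕ => (c n : ℝ) / 2 ^ n) atTop (𝓝 α) := by
  refine ((tendsto_density hα).comp (tendsto_sub_atTop_nat 1)).congr' ?_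
  filter_upwards [eventually_ge_atTop 1] with n hn
  obtain ⟨m, rfl⟩ : ∃ m, n = m + 1 := ⟨n - 1, by omega⟩
  simp only [Function.comp, density, c, Nat.add_sub_cancel, Nat.cast_mul, Nat.cast_two, pow_succ]
  field_simp

theorem abs_c_even_sub_le {α : ℝ}
    (hα : ∀ k, 4 ≤ k → |density (2 * k + 1) - α| ≤ (√2 / 4) ^ k) (hk : 4 ≤ k) :
    |(c (2 * k + 2) : ℝ) - α * 2 ^ (2 * k + 2)| ≤ 4 * √2 ^ k := by
  have e : (c (2 * k + 2) : ℝ) - α * 2 ^ (2 * k + 2) =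
      2 * ((cstar (2 * k + 1) : ℝ) - α * 2 ^ (2 * k + 1)) := by
    rw [c, show 2 * k + 2 - 1 = 2 * k + 1 by omega, pow_succ]; push_cast; ring
  rw [e, abs_mul, abs_two]
  linarith [abs_cstar_odd_sub_le hα hk]

theorem abs_c_odd_sub_le {α : ℝ}
    (hα : ∀ k, 4 ≤ k → |density (2 * k + 1) - α| ≤ (√2 / 4) ^ k) (ht : 7 ≤ t) :
    |(c (2 * t + 1) : ℝ) - α * (2 ^ (2 * t + 1) + 2 ^ (t + 1))| ≤ 6 * √2 ^ t := by
  have hrec : (2 * cstar (2 * t) : ℝ) = cstar (2 * t + 1) + cstar (t + 1) := by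
    exact_mod_cast two_mul_cstar_two_mul (k := t) (by omega)
  have e : (c (2 * t + 1) : ℝ) - α * (2 ^ (2 * t + 1) + 2 ^ (t + 1)) =
      ((cstar (2 * t + 1) : ℝ) - α * 2 ^ (2 * t + 1)) +
        ((cstar (t + 1) : ℝ) - α * 2 ^ (t + 1)) := by
    rw [c, Nat.add_sub_cancel, Nat.cast_mul, Nat.cast_two, hrec]; ring
  rw [e]
  calc _ ≤ _ := abs_add_le _ _
    _ ≤ 2 * √2 ^ t + 2 * √2 ^ (t + 1) :=
        add_le_add (abs_cstar_odd_sub_le hα (by omega)) (abs_cstar_sub_le hα (by omega))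
    _ ≤ 6 * √2 ^ t := by
        rw [pow_succ]
        nlinarith [Real.sqrt_two_lt_three_halves, pow_nonneg (Real.sqrt_nonneg 2) t]

end PenneyAnte

open PenneyAnte

open Filter in
/-- There exist `α > 0` (namely `α = lim c_n/2^n`) and `K > 0` such that for all
sufficiently large `n`: if `n` is even then `|c_n - α·2^n| ≤ K·2^{n/4}`, and if `n` is
odd then `|c_n - α·(2^n + 2^{⌊n/2⌋+1})| ≤ K·2^{n/4}`. -/
theorem cn_asymptotic :
    ∃ α : ℝ, 0 < α ∧
      Tendsto (fun n : ℕ => (c n : ℝ) / 2 ^ n) atTop (nhds α) ∧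
      ∃ K : ℝ, 0 < K ∧ ∃ N : ℕ, ∀ n : ℕ, N ≤ n →
        (Even n → |(c n : ℝ) - α * 2 ^ n| ≤ K * (2 : ℝ) ^ ((n : ℝ) / 4)) ∧
        (Odd n → |(c n : ℝ) - α * (2 ^ n + 2 ^ (n / 2 + 1))| ≤
          K * (2 : ℝ) ^ ((n : ℝ) / 4)) := by
  obtain ⟨α, hα⟩ := exists_abs_density_odd_sub_le
  refine ⟨α, pos_of_abs_density_odd_sub_le hα, tendsto_c_div_two_pow hα, 6, by norm_num, 15,
    fun n hn => ⟨?_, ?_⟩⟩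
  · rintro ⟨t, rfl⟩
    rw [show t + t = 2 * (t - 1) + 2 by omega]
    calc _ ≤ 4 * √2 ^ (t - 1) := abs_c_even_sub_le hα (by omega)
      _ ≤ 6 * (2 : ℝ) ^ (((2 * (t - 1) + 2 : ℕ) : ℝ) / 4) := by
        gcongr
        · norm_num
        · exact sqrt_two_pow_le_two_rpow (by omega)
  · rintro ⟨t, rfl⟩
    rw [show (2 * t + 1) / 2 + 1 = t + 1 by omega]
    calc _ ≤ 6 * √2 ^ t := abs_c_odd_sub_le hα (by omega)
      _ ≤ 6 * (2 : ℝ) ^ (((2 * t + 1 : ℕ) : ℝ) / 4) := by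
        gcongr
        exact sqrt_two_pow_le_two_rpow (by omega)
end

section
/- For every integer m ≥ 3, c_{2m+1} = 4^{m−2}·c_5 − ∑_{i=4}^{m+1} c_i · 4^{m+1−i}. -/
namespace PenneyAux

lemma cstar3 : cstar 3 = 1 := by decide
lemma cstar4 : cstar 4 = 1 := by decide
lemma cstar6 : cstar 6 = 3 := by decide

attribute [local instance] Classical.propDecidable

/-! ### Words as `ℕ → Bool` functions -/

/-- Extend a word of length `n` to all of `ℕ` by `false`. -/
def ext {n : ℕ} (A : Fin n → Bool) : ℕ → Bool := fun i => if h : i < n then A ⟨i, h⟩ else false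

/-- Restrict an infinite word to length `n`. -/
def rst (n : ℕ) (f : ℕ → Bool) : Fin n → Bool := fun i => f i.val

/-- Cut an infinite word at `n` (zero it out beyond `n`). -/
def cutf (n : ℕ) (f : ℕ → Bool) : ℕ → Bool := fun i => if i < n then f i else false

/-- `f` (as a word of length `n`) has a border of length `ℓ`. -/
def brd (n : ℕ) (f : ℕ → Bool) (ℓ : ℕ) : Prop := ∀ i < ℓ, f i = f (n - ℓ + i)

/-- Prefix `10` and suffix `01` condition. -/
def PS (n : ℕ) (f : ℕ → Bool) : Prop :=
  f 0 = true ∧ f 1 = false ∧ f (n - 2) = false ∧ f (n - 1) = true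

/-- No border of length in `[2, d]`. -/
def NB (n : ℕ) (f : ℕ → Bool) (d : ℕ) : Prop := ∀ ℓ, 2 ≤ ℓ → ℓ ≤ d → ¬ brd n f ℓ

def Sp (n : ℕ) (f : ℕ → Bool) : Prop := PS n f ∧ NB n f (n - 1)

def Tp (n d : ℕ) (f : ℕ → Bool) : Prop := PS n f ∧ NB n f d

noncomputable def N (n : ℕ) : ℕ := Nat.card {A : Fin n → Bool // Sp n (ext A)}

noncomputable def Tc (n d : ℕ) : ℕ := Nat.card {A : Fin n → Bool // Tp n d (ext A)}

lemma ext_lt {n : ℕ} (A : Fin n → Bool) {i : ℕ} (h : i < n) : ext A i = A ⟨i, h⟩ := dif_pos h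

lemma ext_ge {n : ℕ} (A : Fin n → Bool) {i : ℕ} (h : n ≤ i) : ext A i = false :=
  dif_neg (by omega)

lemma ext_supp {n : ℕ} (A : Fin n → Bool) : ∀ i, n ≤ i → ext A i = false := fun _ h => ext_ge A h

lemma ext_rst {n : ℕ} (f : ℕ → Bool) (hf : ∀ i, n ≤ i → f i = false) : ext (rst n f) = f := by
  funext i
  by_cases h : i < n
  · rw [ext_lt _ h]; rfl
  · rw [ext_ge _ (by omega), hf i (by omega)]

lemma ext_rst_cut {n : ℕ} (f : ℕ → Bool) : ext (rst n f) = cutf n f := by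
  funext i
  by_cases h : i < n
  · rw [ext_lt _ h, cutf, if_pos h]; rfl
  · rw [ext_ge _ (by omega), cutf, if_neg h]

lemma rst_ext {n : ℕ} (A : Fin n → Bool) : rst n (ext A) = A := by
  funext i
  show ext A i.val = A i
  rw [ext_lt A i.isLt]

/-! ### `cstar` counts words with no border of length in `[2, m-1]` -/

lemma conway_term_iff {m : ℕ} (A : Fin m → Bool) (i : Fin m) :
    (∀ j : Fin m, (i : ℕ) + (j : ℕ) < m → A (i + j) = A j) ↔ brd m (ext A) (m - (i : ℕ)) := by
  have him := i.isLt
  constructor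
  · intro h t ht
    have h2 : t < m := by omega
    have h1 : (i : ℕ) + t < m := by omega
    have := h ⟨t, h2⟩ h1
    have hadd : (i + (⟨t, h2⟩ : Fin m)) = ⟨(i : ℕ) + t, h1⟩ := by
      apply Fin.ext
      simp [Fin.add_def, Nat.mod_eq_of_lt h1]
    rw [hadd] at this
    rw [ext_lt _ h2, ext_lt _ (show m - (m - (i : ℕ)) + t < m by omega)]
    rw [← this]
    congr 1
    apply Fin.ext
    show (i : ℕ) + t = m - (m - (i : ℕ)) + t
    omega
  · intro h j hj
    have := h j.val (by omega)
    have hadd : (i + j) = (⟨m - (m - (i : ℕ)) + (j : ℕ), by omega⟩ : Fin m) := by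
      apply Fin.ext
      simp only [Fin.add_def]
      rw [Nat.mod_eq_of_lt hj]
      omega
    rw [hadd]
    calc A ⟨m - (m - (i : ℕ)) + (j : ℕ), by omega⟩
        = ext A (m - (m - (i : ℕ)) + (j : ℕ)) := (ext_lt A (by omega)).symm
      _ = ext A (j : ℕ) := this.symm
      _ = A j := by rw [ext_lt A j.isLt]
lemma conway_eq {m : ℕ} (A : Fin m → Bool) :
    conway A A = ∑ i ∈ Finset.range m,
      if brd m (ext A) (m - i) then 2 ^ (m - 1 - i) else 0 := by
  rw [conway, ← Fin.sum_univ_eq_sum_range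
    (fun i => if brd m (ext A) (m - i) then 2 ^ (m - 1 - i) else 0) m]
  refine Finset.sum_congr rfl fun i _ => ?_
  exact if_congr (conway_term_iff A i) rfl rfl

lemma conway_iff_NB {m : ℕ} (hm : 3 ≤ m) (A : Fin m → Bool) (hPS : PS m (ext A)) :
    conway A A = 2 ^ (m - 1) + 1 ↔ NB m (ext A) (m - 1) := by
  obtain ⟨n, rfl⟩ : ∃ n, m = n + 3 := ⟨m - 3, by omega⟩
  rw [conway_eq, Finset.sum_range_succ, Finset.sum_range_succ']
  have hb0 : brd (n + 3) (ext A) (n + 3 - 0) := by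
    intro i hi
    congr 1
    omega
  have hbtop : brd (n + 3) (ext A) (n + 3 - (n + 2)) := by
    intro i hi
    have hi0 : i = 0 := by omega
    subst hi0
    rw [show n + 3 - (n + 3 - (n + 2)) + 0 = n + 3 - 1 by omega, hPS.1, hPS.2.2.2]
  rw [if_pos hb0, if_pos hbtop,
    show n + 3 - 1 - (n + 2) = 0 by omega, pow_zero,
    show n + 3 - 1 - 0 = n + 2 by omega,
    show n + 3 - 1 = n + 2 by omega]
  constructor
  · intro h ℓ h2 hup hb
    have hz : (∑ i ∈ Finset.range (n + 1),
        if brd (n + 3) (ext A) (n + 3 - (i + 1)) then 2 ^ (n + 2 - (i + 1)) else 0) = 0 := by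
      omega
    have key := (Finset.sum_eq_zero_iff.mp hz) (n + 2 - ℓ)
      (by simp only [Finset.mem_range]; omega)
    rw [show n + 3 - (n + 2 - ℓ + 1) = ℓ by omega, if_pos hb] at key
    exact absurd key (by positivity)
  · intro h
    have hz : (∑ i ∈ Finset.range (n + 1),
        if brd (n + 3) (ext A) (n + 3 - (i + 1)) then 2 ^ (n + 2 - (i + 1)) else 0) = 0 := by
      apply Finset.sum_eq_zero
      intro i hi
      rw [Finset.mem_range] at hi
      rw [if_neg (h (n + 3 - (i + 1)) (by omega) (by omega))]
    omega

lemma cstar_eq_N {m : ℕ} (hm : 3 ≤ m) : cstar m = N m := by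
  rw [cstar, N, ← Nat.card_eq_fintype_card]
  apply Nat.card_congr
  apply Equiv.subtypeEquivRight
  intro A
  have hPS_iff : ((∀ i : Fin m, (i : ℕ) = 0 → A i = true) ∧
      (∀ i : Fin m, (i : ℕ) = 1 → A i = false) ∧
      (∀ i : Fin m, (i : ℕ) = m - 2 → A i = false) ∧
      (∀ i : Fin m, (i : ℕ) = m - 1 → A i = true)) ↔ PS m (ext A) := by
    constructor
    · rintro ⟨h0, h1, h2, h3⟩
      refine ⟨?_, ?_, ?_, ?_⟩
      · rw [ext_lt _ (show 0 < m by omega)]; exact h0 _ rfl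
      · rw [ext_lt _ (show 1 < m by omega)]; exact h1 _ rfl
      · rw [ext_lt _ (show m - 2 < m by omega)]; exact h2 _ rfl
      · rw [ext_lt _ (show m - 1 < m by omega)]; exact h3 _ rfl
    · rintro ⟨h0, h1, h2, h3⟩
      refine ⟨?_, ?_, ?_, ?_⟩ <;> intro i hi <;>
        [(rw [← h0]); (rw [← h1]); (rw [← h2]); (rw [← h3])] <;>
        rw [ext_lt _ (by omega)] <;> exact congrArg A (Fin.ext (by simpa using hi))
  constructor
  · rintro ⟨h0, h1, h2, h3, hc⟩
    have hPS := hPS_iff.1 ⟨h0, h1, h2, h3⟩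
    exact ⟨hPS, (conway_iff_NB hm A hPS).1 hc⟩
  · rintro ⟨hPS, hNB⟩
    obtain ⟨h0, h1, h2, h3⟩ := hPS_iff.2 hPS
    exact ⟨h0, h1, h2, h3, (conway_iff_NB hm A hPS).2 hNB⟩

/-! ### Border combinatorics -/

lemma brd_double {n ℓ : ℕ} {f : ℕ → Bool} (hn : ℓ ≤ n) (h2 : n ≤ 2 * ℓ) (h : brd n f ℓ) :
    brd n f (2 * ℓ - n) := by
  intro i hi
  have e1 : f i = f (n - ℓ + i) := h i (by omega)
  have e2 : f (n - ℓ + i) = f (n - ℓ + (n - ℓ + i)) := h _ (by omega)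
  rw [e1, e2]
  congr 1
  omega

lemma brd_chain {K : ℕ} (hK : 2 ≤ K) {f : ℕ → Bool} (hnb : NB (2 * K) f (K - 2)) :
    ∀ ℓ, 2 ≤ ℓ → ℓ ≤ 2 * K - 1 → brd (2 * K) f ℓ →
      brd (2 * K) f (K - 1) ∨ brd (2 * K) f K := by
  intro ℓ
  induction ℓ using Nat.strong_induction_on with
  | _ ℓ ih =>
    intro h2 hup hb
    rcases lt_trichotomy ℓ (K - 1) with h | h | h
    · exact absurd hb (hnb ℓ h2 (by omega))
    · left; rwa [← h]
    · rcases Nat.lt_or_ge ℓ (K + 1) with h' | h'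
      · have hlK : ℓ = K := by omega
        rw [hlK] at hb
        exact Or.inr hb
      · have hd := brd_double (show ℓ ≤ 2 * K by omega) (by omega) hb
        exact ih (2 * ℓ - 2 * K) (by omega) (by omega) (by omega) hd

lemma not_brd_both {K : ℕ} (hK : 2 ≤ K) {f : ℕ → Bool} (hPS : PS (2 * K) f)
    (h1 : brd (2 * K) f (K - 1)) (h2 : brd (2 * K) f K) : False := by
  have key : ∀ j, j ≤ K - 1 → f (K + j) = f K := by
    intro j
    induction j with
    | zero => intro _; rfl
    | succ j ihj =>
      intro hj
      have e1 : f j = f (2 * K - (K - 1) + j) := h1 j (by omega)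
      have e2 : f j = f (2 * K - K + j) := h2 j (by omega)
      have e1' : f j = f (K + (j + 1)) := by rw [e1]; congr 1; omega
      have e2' : f j = f (K + j) := by rw [e2]; congr 1; omega
      rw [← e1', e2']
      exact ihj (by omega)
  have a := key (K - 2) (by omega)
  have b := key (K - 1) (by omega)
  rw [show K + (K - 2) = 2 * K - 2 by omega] at a
  rw [show K + (K - 1) = 2 * K - 1 by omega] at b
  rw [hPS.2.2.1] at a
  rw [hPS.2.2.2] at b
  rw [← a] at b
  simp at b

lemma Sp_iff_T {K : ℕ} (hK : 3 ≤ K) {f : ℕ → Bool} (hT : Tp (2 * K) (K - 2) f) :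
    Sp (2 * K) f ↔ ¬ brd (2 * K) f (K - 1) ∧ ¬ brd (2 * K) f K := by
  constructor
  · intro hS
    exact ⟨hS.2 (K - 1) (by omega) (by omega), hS.2 K (by omega) (by omega)⟩
  · rintro ⟨hA, hB⟩
    refine ⟨hT.1, fun ℓ h2 hup hb => ?_⟩
    rcases brd_chain (by omega) hT.2 ℓ h2 (by omega) hb with h | h
    exacts [hA h, hB h]

/-! ### The deletion / insertion bijection -/

def delf (k : ℕ) (f : ℕ → Bool) : ℕ → Bool := fun i => if i < k - 1 then f i else f (i + 2)

def insf (k : ℕ) (f : ℕ → Bool) (cc d : Bool) : ℕ → Bool := fun i =>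
  if i < k - 1 then f i else if i = k - 1 then cc else if i = k then d else f (i - 2)

lemma delf_insf (k : ℕ) (hk : 1 ≤ k) (f : ℕ → Bool) (cc d : Bool) :
    delf k (insf k f cc d) = f := by
  funext i
  simp only [delf, insf]
  by_cases h : i < k - 1
  · rw [if_pos h, if_pos h]
  · rw [if_neg h, if_neg (by omega), if_neg (by omega), if_neg (by omega)]
    congr 1

lemma insf_delf (k : ℕ) (hk : 1 ≤ k) (f : ℕ → Bool) :
    insf k (delf k f) (f (k - 1)) (f k) = f := by
  funext i
  simp only [insf, delf]
  by_cases h : i < k - 1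
  · rw [if_pos h, if_pos h]
  · rw [if_neg h]
    by_cases h1 : i = k - 1
    · rw [if_pos h1, h1]
    · rw [if_neg h1]
      by_cases h2 : i = k
      · rw [if_pos h2, h2]
      · rw [if_neg h2, if_neg (by omega)]
        congr 1
        omega

lemma delf_supp {k : ℕ} (hk : 3 ≤ k) (f : ℕ → Bool) (hf : ∀ i, 2 * k ≤ i → f i = false) :
    ∀ i, 2 * k - 2 ≤ i → delf k f i = false := by
  intro i hi
  rw [delf, if_neg (by omega)]
  exact hf _ (by omega)

lemma insf_supp {k : ℕ} (hk : 3 ≤ k) (f : ℕ → Bool) (cc d : Bool)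
    (hf : ∀ i, 2 * k - 2 ≤ i → f i = false) :
    ∀ i, 2 * k ≤ i → insf k f cc d i = false := by
  intro i hi
  rw [insf, if_neg (by omega), if_neg (by omega), if_neg (by omega)]
  exact hf _ (by omega)

lemma brd_delf_iff {k ℓ : ℕ} (hk : 3 ≤ k) (hℓ : ℓ ≤ k - 2) (f : ℕ → Bool) :
    brd (2 * k - 2) (delf k f) ℓ ↔ brd (2 * k) f ℓ := by
  unfold brd
  refine forall₂_congr fun i hi => ?_
  have h1 : delf k f i = f i := if_pos (by omega)
  have h2 : delf k f (2 * k - 2 - ℓ + i) = f (2 * k - ℓ + i) := by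
    rw [delf]
    rw [if_neg (by omega)]
    congr 1
    omega
  rw [h1, h2]

lemma PS_delf {k : ℕ} (hk : 3 ≤ k) {f : ℕ → Bool} (h : PS (2 * k) f) :
    PS (2 * k - 2) (delf k f) := by
  obtain ⟨h0, h1, h2, h3⟩ := h
  refine ⟨?_, ?_, ?_, ?_⟩
  · rw [delf, if_pos (by omega)]; exact h0
  · rw [delf, if_pos (by omega)]; exact h1
  · simp only [delf]; rw [if_neg (by omega), show 2 * k - 2 - 2 + 2 = 2 * k - 2 by omega]
    exact h2
  · simp only [delf]; rw [if_neg (by omega), show 2 * k - 2 - 1 + 2 = 2 * k - 1 by omega]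
    exact h3

lemma PS_insf {k : ℕ} (hk : 3 ≤ k) {f : ℕ → Bool} (h : PS (2 * k - 2) f) (cc d : Bool) :
    PS (2 * k) (insf k f cc d) := by
  obtain ⟨h0, h1, h2, h3⟩ := h
  refine ⟨?_, ?_, ?_, ?_⟩
  · rw [insf, if_pos (by omega)]; exact h0
  · rw [insf, if_pos (by omega)]; exact h1
  · rw [insf]
    rw [if_neg (by omega), if_neg (by omega), if_neg (by omega)]
    exact h2
  · rw [insf]
    rw [if_neg (by omega), if_neg (by omega), if_neg (by omega),
      show 2 * k - 1 - 2 = 2 * k - 2 - 1 by omega]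
    exact h3

lemma Tp_delf {k : ℕ} (hk : 3 ≤ k) {f : ℕ → Bool} (h : Tp (2 * k) (k - 2) f) :
    Tp (2 * k - 2) (k - 2) (delf k f) :=
  ⟨PS_delf hk h.1, fun ℓ h2 hup hb => h.2 ℓ h2 hup ((brd_delf_iff hk hup f).1 hb)⟩

lemma Tp_insf {k : ℕ} (hk : 3 ≤ k) {f : ℕ → Bool} (h : Tp (2 * k - 2) (k - 2) f) (cc d : Bool) :
    Tp (2 * k) (k - 2) (insf k f cc d) := by
  refine ⟨PS_insf hk h.1 cc d, fun ℓ h2 hup hb => h.2 ℓ h2 hup ?_⟩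
  have := (brd_delf_iff hk hup (insf k f cc d)).2 hb
  rwa [delf_insf k (by omega)] at this

noncomputable def equivIns (k : ℕ) (hk : 3 ≤ k) :
    {A : Fin (2 * k) → Bool // Tp (2 * k) (k - 2) (ext A)} ≃
      ({B : Fin (2 * k - 2) → Bool // Tp (2 * k - 2) (k - 2) (ext B)} × Bool × Bool) where
  toFun x := (⟨rst (2 * k - 2) (delf k (ext x.1)), by
      rw [ext_rst _ (delf_supp hk _ (ext_supp x.1))]
      exact Tp_delf hk x.2⟩, ext x.1 (k - 1), ext x.1 k)
  invFun y := ⟨rst (2 * k) (insf k (ext y.1.1) y.2.1 y.2.2), by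
      rw [ext_rst _ (insf_supp hk _ _ _ (ext_supp y.1.1))]
      exact Tp_insf hk y.1.2 _ _⟩
  left_inv x := by
    apply Subtype.ext
    show rst (2 * k) (insf k (ext (rst (2 * k - 2) (delf k (ext x.1))))
      (ext x.1 (k - 1)) (ext x.1 k)) = x.1
    rw [ext_rst _ (delf_supp hk _ (ext_supp x.1)), insf_delf k (by omega), rst_ext]
  right_inv y := by
    have h1 : ext (rst (2 * k) (insf k (ext y.1.1) y.2.1 y.2.2))
        = insf k (ext y.1.1) y.2.1 y.2.2 :=
      ext_rst _ (insf_supp hk _ _ _ (ext_supp y.1.1))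
    refine Prod.ext ?_ (Prod.ext ?_ ?_)
    · apply Subtype.ext
      show rst (2 * k - 2) (delf k (ext (rst (2 * k) (insf k (ext y.1.1) y.2.1 y.2.2)))) = y.1.1
      rw [h1, delf_insf k (by omega), rst_ext]
    · show ext (rst (2 * k) (insf k (ext y.1.1) y.2.1 y.2.2)) (k - 1) = y.2.1
      rw [h1, insf, if_neg (by omega), if_pos rfl]
    · show ext (rst (2 * k) (insf k (ext y.1.1) y.2.1 y.2.2)) k = y.2.2
      rw [h1, insf, if_neg (by omega), if_neg (by omega), if_pos rfl]

lemma Tc_ins {k : ℕ} (hk : 3 ≤ k) : Tc (2 * k) (k - 2) = 4 * Tc (2 * k - 2) (k - 2) := by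
  rw [Tc, Tc, Nat.card_congr (equivIns k hk), Nat.card_prod, Nat.card_prod]
  have : Nat.card Bool = 2 := by rw [Nat.card_eq_fintype_card, Fintype.card_bool]
  rw [this]
  ring

/-! ### The `w = uu` bijection -/

def dupf (K : ℕ) (f : ℕ → Bool) : ℕ → Bool := fun i => if i < K then f i else f (i - K)

lemma dupf_supp {K : ℕ} (hK : 1 ≤ K) (f : ℕ → Bool) (hf : ∀ i, K ≤ i → f i = false) :
    ∀ i, 2 * K ≤ i → dupf K f i = false := by
  intro i hi
  rw [dupf, if_neg (by omega)]
  exact hf _ (by omega)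

lemma uu_forward {K : ℕ} (hK : 3 ≤ K) {f : ℕ → Bool} (hT : Tp (2 * K) (K - 2) f)
    (hb : brd (2 * K) f K) : Sp K (cutf K f) := by
  have hb' : ∀ i < K, f i = f (K + i) := by
    intro i hi
    have := hb i hi
    rwa [show 2 * K - K + i = K + i by omega] at this
  obtain ⟨⟨h0, h1, h2, h3⟩, hNB⟩ := hT
  constructor
  · refine ⟨?_, ?_, ?_, ?_⟩
    · rw [cutf, if_pos (by omega)]; exact h0
    · rw [cutf, if_pos (by omega)]; exact h1
    · rw [cutf, if_pos (by omega), hb' (K - 2) (by omega),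
        show K + (K - 2) = 2 * K - 2 by omega]
      exact h2
    · rw [cutf, if_pos (by omega), hb' (K - 1) (by omega),
        show K + (K - 1) = 2 * K - 1 by omega]
      exact h3
  · intro ℓ hl2 hlup hbu
    have hbf : brd (2 * K) f ℓ := by
      intro i hi
      have := hbu i hi
      simp only [cutf] at this
      rw [if_pos (by omega), if_pos (show K - ℓ + i < K by omega)] at this
      rw [this, hb' (K - ℓ + i) (by omega)]
      congr 1
      omega
    rcases Nat.lt_or_ge ℓ (K - 1) with h | h
    · exact hNB ℓ hl2 (by omega) hbf
    · have hl : ℓ = K - 1 := by omega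
      subst hl
      have := hbu 0 (by omega)
      simp only [cutf] at this
      rw [if_pos (by omega), if_pos (show K - (K - 1) + 0 < K by omega)] at this
      rw [show K - (K - 1) + 0 = 1 by omega] at this
      rw [h0, h1] at this
      simp at this

lemma uu_backward {K : ℕ} (hK : 3 ≤ K) {u : ℕ → Bool} (hu : Sp K u)
    (hsupp : ∀ i, K ≤ i → u i = false) :
    Tp (2 * K) (K - 2) (dupf K u) ∧ brd (2 * K) (dupf K u) K := by
  obtain ⟨⟨h0, h1, h2, h3⟩, hNB⟩ := hu
  have hval_lo : ∀ i < K, dupf K u i = u i := fun i hi => if_pos hi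
  have hval_hi : ∀ i, K ≤ i → i < 2 * K → dupf K u i = u (i - K) := by
    intro i hi1 hi2
    rw [dupf, if_neg (by omega)]
  refine ⟨⟨⟨?_, ?_, ?_, ?_⟩, ?_⟩, ?_⟩
  · rw [hval_lo 0 (by omega)]; exact h0
  · rw [hval_lo 1 (by omega)]; exact h1
  · rw [hval_hi (2 * K - 2) (by omega) (by omega), show 2 * K - 2 - K = K - 2 by omega]
    exact h2
  · rw [hval_hi (2 * K - 1) (by omega) (by omega), show 2 * K - 1 - K = K - 1 by omega]
    exact h3
  · intro ℓ hl2 hlup hb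
    apply hNB ℓ hl2 (by omega)
    intro i hi
    have := hb i hi
    rw [hval_lo i (by omega), hval_hi (2 * K - ℓ + i) (by omega) (by omega)] at this
    rw [this]
    congr 1
    omega
  · intro i hi
    rw [hval_lo i hi, hval_hi (2 * K - K + i) (by omega) (by omega)]
    congr 1
    omega

noncomputable def equivUU (K : ℕ) (hK : 3 ≤ K) :
    {A : Fin (2 * K) → Bool // Tp (2 * K) (K - 2) (ext A) ∧ brd (2 * K) (ext A) K} ≃
      {u : Fin K → Bool // Sp K (ext u)} where
  toFun x := ⟨rst K (ext x.1), by
      rw [ext_rst_cut]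
      exact uu_forward hK x.2.1 x.2.2⟩
  invFun u := ⟨rst (2 * K) (dupf K (ext u.1)), by
      rw [ext_rst _ (dupf_supp (by omega) _ (ext_supp u.1))]
      exact uu_backward hK u.2 (ext_supp u.1)⟩
  left_inv x := by
    apply Subtype.ext
    have hb' : ∀ i < K, ext x.1 i = ext x.1 (K + i) := by
      intro i hi
      have := x.2.2 i hi
      rwa [show 2 * K - K + i = K + i by omega] at this
    funext j
    show dupf K (ext (rst K (ext x.1))) j.val = x.1 j
    rw [ext_rst_cut]
    have hj := j.isLt
    by_cases h : j.val < K
    · rw [dupf, if_pos h, cutf, if_pos h, ext_lt _ j.isLt]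
    · rw [dupf, if_neg h, cutf, if_pos (show j.val - K < K by omega)]
      have := hb' (j.val - K) (by omega)
      rw [show K + (j.val - K) = j.val by omega] at this
      rw [this, ext_lt _ j.isLt]
  right_inv u := by
    apply Subtype.ext
    funext j
    show ext (rst (2 * K) (dupf K (ext u.1))) j.val = u.1 j
    rw [ext_rst _ (dupf_supp (by omega) _ (ext_supp u.1)), dupf,
      if_pos (show j.val < K from j.isLt), ext_lt _ j.isLt]

/-! ### The `w = u c d u` bijection -/

def gluef (k : ℕ) (f : ℕ → Bool) (cc d : Bool) : ℕ → Bool := fun i =>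
  if i < k - 1 then f i else if i = k - 1 then cc else if i = k then d else f (i - (k + 1))

lemma gluef_supp {k : ℕ} (hk : 3 ≤ k) (f : ℕ → Bool) (cc d : Bool)
    (hf : ∀ i, k - 1 ≤ i → f i = false) :
    ∀ i, 2 * k ≤ i → gluef k f cc d i = false := by
  intro i hi
  rw [gluef, if_neg (by omega), if_neg (by omega), if_neg (by omega)]
  exact hf _ (by omega)

lemma ucdu_forward {k : ℕ} (hk : 4 ≤ k) {f : ℕ → Bool} (hT : Tp (2 * k) (k - 2) f)
    (hb : brd (2 * k) f (k - 1)) : Sp (k - 1) (cutf (k - 1) f) := by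
  have hb' : ∀ i < k - 1, f i = f (k + 1 + i) := by
    intro i hi
    have := hb i hi
    rwa [show 2 * k - (k - 1) + i = k + 1 + i by omega] at this
  obtain ⟨⟨h0, h1, h2, h3⟩, hNB⟩ := hT
  constructor
  · refine ⟨?_, ?_, ?_, ?_⟩
    · rw [cutf, if_pos (by omega)]; exact h0
    · rw [cutf, if_pos (by omega)]; exact h1
    · rw [cutf, if_pos (by omega), hb' (k - 1 - 2) (by omega),
        show k + 1 + (k - 1 - 2) = 2 * k - 2 by omega]
      exact h2
    · rw [cutf, if_pos (by omega), hb' (k - 1 - 1) (by omega),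
        show k + 1 + (k - 1 - 1) = 2 * k - 1 by omega]
      exact h3
  · intro ℓ hl2 hlup hbu
    apply hNB ℓ hl2 (by omega)
    intro i hi
    have := hbu i hi
    simp only [cutf] at this
    rw [if_pos (by omega), if_pos (show k - 1 - ℓ + i < k - 1 by omega)] at this
    rw [this, hb' (k - 1 - ℓ + i) (by omega)]
    congr 1
    omega


lemma ucdu_backward {k : ℕ} (hk : 4 ≤ k) {u : ℕ → Bool} (hu : Sp (k - 1) u) (cc d : Bool) :
    Tp (2 * k) (k - 2) (gluef k u cc d) ∧ brd (2 * k) (gluef k u cc d) (k - 1) := by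
  obtain ⟨⟨h0, h1, h2, h3⟩, hNB⟩ := hu
  have hval_lo : ∀ i < k - 1, gluef k u cc d i = u i := fun i hi => if_pos hi
  have hval_hi : ∀ i, k + 1 ≤ i → gluef k u cc d i = u (i - (k + 1)) := by
    intro i hi
    rw [gluef, if_neg (by omega), if_neg (by omega), if_neg (by omega)]
  refine ⟨⟨⟨?_, ?_, ?_, ?_⟩, ?_⟩, ?_⟩
  · rw [hval_lo 0 (by omega)]; exact h0
  · rw [hval_lo 1 (by omega)]; exact h1
  · rw [hval_hi (2 * k - 2) (by omega), show 2 * k - 2 - (k + 1) = k - 1 - 2 by omega]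
    exact h2
  · rw [hval_hi (2 * k - 1) (by omega), show 2 * k - 1 - (k + 1) = k - 1 - 1 by omega]
    exact h3
  · intro ℓ hl2 hlup hb
    apply hNB ℓ hl2 (by omega)
    intro i hi
    have := hb i hi
    rw [hval_lo i (by omega), hval_hi (2 * k - ℓ + i) (by omega)] at this
    rw [this]
    congr 1
    omega
  · intro i hi
    rw [hval_lo i hi, hval_hi (2 * k - (k - 1) + i) (by omega)]
    congr 1
    omega

noncomputable def equivUCDU (k : ℕ) (hk : 4 ≤ k) :
    {A : Fin (2 * k) → Bool // Tp (2 * k) (k - 2) (ext A) ∧ brd (2 * k) (ext A) (k - 1)} ≃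
      ({u : Fin (k - 1) → Bool // Sp (k - 1) (ext u)} × Bool × Bool) where
  toFun x := (⟨rst (k - 1) (ext x.1), by
      rw [ext_rst_cut]
      exact ucdu_forward hk x.2.1 x.2.2⟩, ext x.1 (k - 1), ext x.1 k)
  invFun y := ⟨rst (2 * k) (gluef k (ext y.1.1) y.2.1 y.2.2), by
      rw [ext_rst _ (gluef_supp (by omega) _ _ _ (ext_supp y.1.1))]
      exact ucdu_backward hk y.1.2 _ _⟩
  left_inv x := by
    apply Subtype.ext
    have hb' : ∀ i < k - 1, ext x.1 i = ext x.1 (k + 1 + i) := by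
      intro i hi
      have := x.2.2 i hi
      rwa [show 2 * k - (k - 1) + i = k + 1 + i by omega] at this
    funext j
    show gluef k (ext (rst (k - 1) (ext x.1))) (ext x.1 (k - 1)) (ext x.1 k) j.val = x.1 j
    rw [ext_rst_cut]
    have hj := j.isLt
    by_cases h : j.val < k - 1
    · rw [gluef, if_pos h, cutf, if_pos h, ext_lt _ j.isLt]
    · by_cases h1 : j.val = k - 1
      · rw [gluef, if_neg h, if_pos h1, ext_lt _ (show k - 1 < 2 * k by omega)]
        exact congrArg x.1 (Fin.ext h1.symm)
      · by_cases h2 : j.val = k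
        · rw [gluef, if_neg h, if_neg h1, if_pos h2, ext_lt _ (show k < 2 * k by omega)]
          exact congrArg x.1 (Fin.ext h2.symm)
        · rw [gluef, if_neg h, if_neg h1, if_neg h2, cutf,
            if_pos (show j.val - (k + 1) < k - 1 by omega)]
          have := hb' (j.val - (k + 1)) (by omega)
          rw [show k + 1 + (j.val - (k + 1)) = j.val by omega] at this
          rw [this, ext_lt _ j.isLt]
  right_inv y := by
    have h1 : ext (rst (2 * k) (gluef k (ext y.1.1) y.2.1 y.2.2))
        = gluef k (ext y.1.1) y.2.1 y.2.2 :=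
      ext_rst _ (gluef_supp (by omega) _ _ _ (ext_supp y.1.1))
    refine Prod.ext ?_ (Prod.ext ?_ ?_)
    · apply Subtype.ext
      funext j
      show ext (rst (2 * k) (gluef k (ext y.1.1) y.2.1 y.2.2)) j.val = y.1.1 j
      rw [h1, gluef, if_pos (show j.val < k - 1 from j.isLt), ext_lt _ (by omega)]
    · show ext (rst (2 * k) (gluef k (ext y.1.1) y.2.1 y.2.2)) (k - 1) = y.2.1
      rw [h1, gluef, if_neg (by omega), if_pos rfl]
    · show ext (rst (2 * k) (gluef k (ext y.1.1) y.2.1 y.2.2)) k = y.2.2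
      rw [h1, gluef, if_neg (by omega), if_neg (by omega), if_pos rfl]

/-! ### Counting decompositions -/

lemma disjoint_pred {α : Type*} {p q : α → Prop} (h : ∀ x, p x → q x → False) :
    Disjoint p q := by
  rw [disjoint_iff_inf_le]
  intro x hx
  exact h x hx.1 hx.2

lemma card_or {α : Type*} [Finite α] (p q : α → Prop) (h : ∀ x, p x → q x → False) :
    Nat.card {x : α // p x ∨ q x} = Nat.card {x : α // p x} + Nat.card {x : α // q x} := by
  rw [Nat.card_congr (subtypeOrEquiv p q (disjoint_pred h)), Nat.card_sum]

lemma Tc_split_a {k : ℕ} (hk : 4 ≤ k) :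
    Tc (2 * k) (k - 2) = N (2 * k) + (N k + 4 * N (k - 1)) := by
  have hiff : ∀ A : Fin (2 * k) → Bool, Tp (2 * k) (k - 2) (ext A) ↔
      (Sp (2 * k) (ext A) ∨
        ((Tp (2 * k) (k - 2) (ext A) ∧ brd (2 * k) (ext A) k) ∨
         (Tp (2 * k) (k - 2) (ext A) ∧ brd (2 * k) (ext A) (k - 1)))) := by
    intro A
    constructor
    · intro hT
      by_cases hbK : brd (2 * k) (ext A) k
      · exact Or.inr (Or.inl ⟨hT, hbK⟩)
      · by_cases hbK1 : brd (2 * k) (ext A) (k - 1)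
        · exact Or.inr (Or.inr ⟨hT, hbK1⟩)
        · exact Or.inl ((Sp_iff_T (by omega) hT).2 ⟨hbK1, hbK⟩)
    · rintro (hS | ⟨hT, _⟩ | ⟨hT, _⟩)
      · exact ⟨hS.1, fun ℓ h2 hup => hS.2 ℓ h2 (by omega)⟩
      · exact hT
      · exact hT
  rw [Tc, Nat.card_congr (Equiv.subtypeEquivRight hiff)]
  rw [card_or]
  · rw [card_or]
    · rw [Nat.card_congr (equivUU k (by omega)),
        Nat.card_congr (equivUCDU k hk), Nat.card_prod, Nat.card_prod]
      have hB : Nat.card Bool = 2 := by rw [Nat.card_eq_fintype_card, Fintype.card_bool]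
      rw [hB, N, N, N]
      ring
    · intro A h1 h2
      exact not_brd_both (by omega) h1.1.1 h2.2 h1.2
  · rintro A hS (⟨hT, hb⟩ | ⟨hT, hb⟩)
    · exact hS.2 k (by omega) (by omega) hb
    · exact hS.2 (k - 1) (by omega) (by omega) hb

lemma Tc_split_b {K : ℕ} (hK : 3 ≤ K) :
    Tc (2 * K) (K - 1) = N (2 * K) + N K := by
  have hiff : ∀ A : Fin (2 * K) → Bool, Tp (2 * K) (K - 1) (ext A) ↔
      (Sp (2 * K) (ext A) ∨
        (Tp (2 * K) (K - 2) (ext A) ∧ brd (2 * K) (ext A) K)) := by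
    intro A
    constructor
    · intro hT
      have hT' : Tp (2 * K) (K - 2) (ext A) :=
        ⟨hT.1, fun ℓ h2 hup => hT.2 ℓ h2 (by omega)⟩
      by_cases hbK : brd (2 * K) (ext A) K
      · exact Or.inr ⟨hT', hbK⟩
      · refine Or.inl ((Sp_iff_T hK hT').2 ⟨?_, hbK⟩)
        exact hT.2 (K - 1) (by omega) (by omega)
    · rintro (hS | ⟨hT, hb⟩)
      · exact ⟨hS.1, fun ℓ h2 hup => hS.2 ℓ h2 (by omega)⟩
      · refine ⟨hT.1, fun ℓ h2 hup hbℓ => ?_⟩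
        rcases Nat.lt_or_ge ℓ (K - 1) with h | h
        · exact hT.2 ℓ h2 (by omega) hbℓ
        · have : ℓ = K - 1 := by omega
          rw [this] at hbℓ
          exact not_brd_both (by omega) hT.1 hbℓ hb
  rw [Tc, Nat.card_congr (Equiv.subtypeEquivRight hiff)]
  rw [card_or]
  · rw [Nat.card_congr (equivUU K hK), N, N]
  · rintro A hS ⟨hT, hb⟩
    exact hS.2 K (by omega) (by omega) hb

lemma key_rec {k : ℕ} (hk : 4 ≤ k) : N (2 * k) + N k = 4 * N (2 * k - 2) := by
  have h1 := Tc_split_a hk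
  have h2 : Tc (2 * (k - 1)) ((k - 1) - 1) = N (2 * (k - 1)) + N (k - 1) :=
    Tc_split_b (by omega)
  have h3 := Tc_ins (show 3 ≤ k by omega)
  rw [show 2 * (k - 1) = 2 * k - 2 by omega, show (k - 1) - 1 = k - 2 by omega] at h2
  omega

lemma cstar_rec {k : ℕ} (hk : 4 ≤ k) : cstar (2 * k) + cstar k = 4 * cstar (2 * k - 2) := by
  rw [cstar_eq_N (by omega : 3 ≤ 2 * k), cstar_eq_N (by omega : 3 ≤ k),
    cstar_eq_N (by omega : 3 ≤ 2 * k - 2)]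
  exact key_rec hk

end PenneyAux

/-- For every `m ≥ 3`, `c_{2m+1} = 4^{m-2} c_5 - ∑_{i=4}^{m+1} c_i 4^{m+1-i}`. -/
theorem cn_finite_sum (m : ℕ) (hm : 3 ≤ m) :
    (c (2 * m + 1) : ℤ) =
      4 ^ (m - 2) * (c 5 : ℤ) - ∑ i ∈ Finset.Icc 4 (m + 1), (c i : ℤ) * 4 ^ (m + 1 - i) := by
  induction m, hm using Nat.le_induction with
  | base =>
    rw [show (3 : ℕ) + 1 = 4 from rfl, Finset.Icc_self, Finset.sum_singleton]
    have e7 : c 7 = 6 := by rw [c, show 7 - 1 = 6 by rfl, PenneyAux.cstar6]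
    have e5 : c 5 = 2 := by rw [c, show 5 - 1 = 4 by rfl, PenneyAux.cstar4]
    have e4 : c 4 = 2 := by rw [c, show 4 - 1 = 3 by rfl, PenneyAux.cstar3]
    norm_num [e7, e5, e4]
  | succ n hn ih =>
    have hrec : cstar (2 * (n + 1)) + cstar (n + 1) = 4 * cstar (2 * (n + 1) - 2) :=
      PenneyAux.cstar_rec (by omega)
    have hc : (c (2 * (n + 1) + 1) : ℤ) = 4 * (c (2 * n + 1) : ℤ) - (c (n + 2) : ℤ) := by
      have e1 : c (2 * (n + 1) + 1) = 2 * cstar (2 * (n + 1)) := by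
        rw [c]; congr 1
      have e2 : c (2 * n + 1) = 2 * cstar (2 * n) := by
        rw [c]; congr 1
      have e3 : c (n + 2) = 2 * cstar (n + 1) := by
        rw [c]; congr 1
      have hrec' : cstar (2 * (n + 1)) + cstar (n + 1) = 4 * cstar (2 * n) := by
        rw [show 2 * (n + 1) - 2 = 2 * n by omega] at hrec
        exact hrec
      rw [e1, e2, e3]
      push_cast
      have := congrArg (fun x : ℕ => (x : ℤ)) hrec'
      push_cast at this
      linarith
    have hsum : (∑ i ∈ Finset.Icc 4 (n + 1 + 1), (c i : ℤ) * 4 ^ (n + 1 + 1 - i)) =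
        4 * (∑ i ∈ Finset.Icc 4 (n + 1), (c i : ℤ) * 4 ^ (n + 1 - i)) + (c (n + 2) : ℤ) := by
      rw [Finset.sum_Icc_succ_top (by omega : 4 ≤ n + 1 + 1)]
      rw [show n + 1 + 1 - (n + 1 + 1) = 0 by omega, pow_zero, mul_one, Finset.mul_sum]
      congr 1
      apply Finset.sum_congr rfl
      intro i hi
      rw [Finset.mem_Icc] at hi
      rw [show n + 1 + 1 - i = (n + 1 - i) + 1 by omega, pow_succ]
      ring
    have hpow : (4 : ℤ) ^ (n + 1 - 2) = 4 * 4 ^ (n - 2) := by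
      rw [show n + 1 - 2 = (n - 2) + 1 by omega, pow_succ]
      ring
    rw [hc, hsum, hpow, ih]
    ring
end

section
/- Let n ≥ 3, let A be the all-heads string HH…H of length n, and let B be any head/tail string of length n with B ≠ A. Then C(B,B) − C(B,A) > 0 and C(A,A) − C(A,B) ≥ C(B,B) − C(B,A), with equality holding if and only if B is the all-tails string TT…T or the string HH…HT consisting of n−1 heads followed by one tail. (Equivalently, the odds q(A,B) = (C(A,A) − C(A,B))/(C(B,B) − C(B,A)) in favor of A in the flipped Penney-Ante game satisfy q(A,B) ≥ 1, with equality exactly for those two strings B.) -/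
/-!
Write `C(X,Y) = ∑_{i ∈ Δ(X,Y)} 2^(n-1-i)`, where `Δ(X,Y)` is the set of positions at which a
suffix of `X` is a prefix of `Y`. The weight of position `0` exceeds the sum of all the other
weights, and `0 ∈ Δ(X,Y)` iff `X = Y`; hence `C(B,A) < C(B,B)`.

Now let `A` be constant. Then `Δ(A,A)` is everything, and `Δ(B,B) ∩ Δ(A,B) ⊆ Δ(B,A)`: a suffix
of `B` that equals a constant prefix of `B` is constant. Inclusion–exclusion gives
`C(B,B) + C(A,B) ≤ C(A,A) + C(B,A)`, with equality iff `Δ(B,B) ∪ Δ(A,B)` is everything and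
`Δ(B,B) ∩ Δ(A,B) = Δ(B,A)`. At position `1` the union condition says that `B` is constant or its
first `n - 1` letters agree with `A`; conversely, for the two strings so obtained `Δ(B,A)` is
empty because the last letter of `B` differs from `A`.
-/

namespace Finset

variable {ι : Type*} {f : ι → ℕ} {s t u : Finset ι}

theorem eq_of_subset_of_sum_eq (hf : ∀ i, 0 < f i) (h : s ⊆ t)
    (hsum : ∑ i ∈ s, f i = ∑ i ∈ t, f i) : s = t := by
  by_contra hne
  obtain ⟨i, hit, his⟩ := exists_of_ssubset (h.ssubset_of_ne hne)
  exact (sum_lt_sum_of_subset h hit his (hf i) fun _ _ _ => Nat.zero_le _).ne hsum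

variable [Fintype ι] [DecidableEq ι]

theorem sum_add_sum_le_of_inter_subset (h : s ∩ t ⊆ u) :
    ∑ i ∈ s, f i + ∑ i ∈ t, f i ≤ ∑ i, f i + ∑ i ∈ u, f i := by
  rw [← sum_union_inter]
  exact add_le_add (sum_le_sum_of_subset (subset_univ _)) (sum_le_sum_of_subset h)

theorem sum_add_sum_eq_iff_of_inter_subset (hf : ∀ i, 0 < f i) (h : s ∩ t ⊆ u) :
    ∑ i ∈ s, f i + ∑ i ∈ t, f i = ∑ i, f i + ∑ i ∈ u, f i ↔ s ∪ t = univ ∧ s ∩ t = u := by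
  refine ⟨fun hsum => ?_, fun ⟨hst, hu⟩ => by rw [← sum_union_inter, hst, hu]⟩
  rw [← sum_union_inter] at hsum
  have hunion := sum_le_sum_of_subset (f := f) (subset_univ (s ∪ t))
  have hinter := sum_le_sum_of_subset (f := f) h
  exact ⟨eq_of_subset_of_sum_eq hf (subset_univ _) (by omega),
    eq_of_subset_of_sum_eq hf h (by omega)⟩

end Finset

namespace Conway

open Finset

variable {n : ℕ}

/-- Conway's `δ_{i+1}`: the suffix of `A` starting at position `i` is a prefix of `B`. -/
def Overlap (A B : Fin n → Bool) (i : Fin n) : Prop :=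
  ∀ j : Fin n, (i : ℕ) + (j : ℕ) < n → A (i + j) = B j

instance (A B : Fin n → Bool) : DecidablePred (Overlap A B) :=
  fun _ => inferInstanceAs (Decidable (∀ _, _))

theorem conway_eq_sum_filter (A B : Fin n → Bool) :
    conway A B = ∑ i with Overlap A B i, 2 ^ (n - 1 - (i : ℕ)) := by
  rw [sum_filter]
  rfl

theorem overlap_iff {A B : Fin n → Bool} {i : Fin n} :
    Overlap A B i ↔ ∀ j k : Fin n, (j : ℕ) = i + k → A j = B k := by
  refine ⟨fun h j k hjk => ?_, fun h k hk => h _ k (by rw [Fin.val_add, Nat.mod_eq_of_lt hk])⟩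
  have hj : j = i + k := Fin.ext (by rw [Fin.val_add, ← hjk, Nat.mod_eq_of_lt j.isLt])
  exact hj ▸ h k (hjk ▸ j.isLt)

theorem overlap_zero_iff [NeZero n] {A B : Fin n → Bool} : Overlap A B 0 ↔ A = B :=
  ⟨fun h => funext fun k => by simpa using h k (by simp), fun h k _ => by rw [zero_add, h]⟩

theorem neZero_of_ne {A B : Fin n → Bool} (h : A ≠ B) : NeZero n :=
  ⟨by rintro rfl; exact h (Subsingleton.elim _ _)⟩

theorem conway_lt_two_pow {A B : Fin n → Bool} (h : A ≠ B) : conway A B < 2 ^ (n - 1) := by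
  have := neZero_of_ne h
  rw [conway_eq_sum_filter, ← sum_image (f := (2 ^ ·)) (g := fun i : Fin n => n - 1 - (i : ℕ))
    fun i _ j _ hij => Fin.ext (by simp only at hij; omega)]
  refine Nat.geomSum_lt le_rfl ?_
  simp only [mem_image, mem_filter, mem_univ, true_and]
  rintro _ ⟨i, hi, rfl⟩
  have : i ≠ 0 := by rintro rfl; exact h (overlap_zero_iff.1 hi)
  have : (i : ℕ) ≠ 0 := Fin.val_ne_iff.2 this
  omega

theorem two_pow_le_conway_self [NeZero n] (A : Fin n → Bool) : 2 ^ (n - 1) ≤ conway A A := by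
  rw [conway_eq_sum_filter]
  exact single_le_sum (f := fun i : Fin n => 2 ^ (n - 1 - (i : ℕ))) (fun _ _ => Nat.zero_le _)
    (mem_filter.2 ⟨mem_univ _, overlap_zero_iff.2 rfl⟩)

theorem conway_lt_conway_self {A B : Fin n → Bool} (h : A ≠ B) : conway A B < conway A A := by
  have := neZero_of_ne h
  exact (conway_lt_two_pow h).trans_le (two_pow_le_conway_self A)

section Constant

variable (c : Bool) {B : Fin n → Bool} {i : Fin n}

theorem overlap_const_const : Overlap (fun _ : Fin n => c) (fun _ => c) i :=
  fun _ _ => rfl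

theorem overlap_const_left_iff :
    Overlap (fun _ => c) B i ↔ ∀ k : Fin n, (i : ℕ) + k < n → B k = c :=
  forall₂_congr fun _ _ => eq_comm

theorem overlap_const_right_iff :
    Overlap B (fun _ => c) i ↔ ∀ j : Fin n, (i : ℕ) ≤ j → B j = c := by
  rw [overlap_iff]
  exact ⟨fun h j hj => h j ⟨j - i, by omega⟩ (by simp only; omega), fun h j k hjk => h j (by omega)⟩

theorem overlap_const_right_of_overlap_self (hBB : Overlap B B i)
    (hcB : Overlap (fun _ => c) B i) : Overlap B (fun _ => c) i :=
  fun j hj => (hBB j hj).trans (hcB j hj).symm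

theorem eq_const_of_overlap_self_one (h : 1 < n) (hB : Overlap B B ⟨1, h⟩) :
    B = fun _ => B ⟨0, by omega⟩ := by
  rw [overlap_iff] at hB
  funext ⟨j, hj⟩
  induction j with
  | zero => rfl
  | succ j ih => exact (hB _ ⟨j, by omega⟩ (by simp only; omega)).trans (ih (by omega))

theorem forall_overlap_iff (hB : B ≠ fun _ => c) :
    (∀ i, Overlap B B i ∨ Overlap (fun _ => c) B i) ↔
      B = (fun _ => !c) ∨ B = fun j : Fin n => if (j : ℕ) < n - 1 then c else !c := by
  have := neZero_of_ne hB
  have hn := NeZero.ne n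
  constructor
  · intro hcov
    by_cases hpre : ∀ j : Fin n, (j : ℕ) < n - 1 → B j = c
    · right
      have hlast : B ⟨n - 1, by omega⟩ = !c := by
        refine Bool.eq_not.2 fun hBc => hB (funext fun j => ?_)
        by_cases hj : (j : ℕ) < n - 1
        · exact hpre j hj
        · rwa [show j = ⟨n - 1, by omega⟩ from Fin.ext (by simp only; omega)]
      funext j
      split_ifs with hj
      · exact hpre j hj
      · rwa [show j = ⟨n - 1, by omega⟩ from Fin.ext (by simp only; omega)]
    · left
      push Not at hpre
      obtain ⟨j, hj, hBj⟩ := hpre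
      have h1 : 1 < n := by omega
      have hshift : ¬Overlap (fun _ => c) B ⟨1, h1⟩ := fun h =>
        hBj ((overlap_const_left_iff c).1 h j (by simp only; omega))
      rw [eq_const_of_overlap_self_one h1 ((hcov _).resolve_right hshift)] at hBj ⊢
      exact funext fun _ => Bool.eq_not.2 hBj
  · rintro (rfl | rfl) i
    · exact .inl (overlap_const_const _)
    · by_cases hi : i = 0
      · exact .inl (hi ▸ overlap_zero_iff.2 rfl)
      · have : (i : ℕ) ≠ 0 := Fin.val_ne_iff.2 hi
        refine .inr ((overlap_const_left_iff c).2 fun k hk => ?_)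
        rw [if_pos (by omega)]

theorem not_overlap_const_of_last (h : n ≠ 0) (hB : B ⟨n - 1, by omega⟩ ≠ c) :
    ¬Overlap B (fun _ => c) i :=
  fun hBc => hB ((overlap_const_right_iff c).1 hBc _ (by simp only; omega))

theorem conway_const_const :
    conway (fun _ : Fin n => c) (fun _ => c) = ∑ i : Fin n, 2 ^ (n - 1 - (i : ℕ)) := by
  rw [conway_eq_sum_filter, filter_true_of_mem fun i _ => overlap_const_const c]

theorem filter_overlap_self_inter_subset (B : Fin n → Bool) :
    univ.filter (Overlap B B) ∩ univ.filter (Overlap (fun _ => c) B) ⊆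
      univ.filter (Overlap B (fun _ => c)) := by
  intro i hi
  simp only [mem_inter, mem_filter, mem_univ, true_and] at hi ⊢
  exact overlap_const_right_of_overlap_self c hi.1 hi.2

theorem conway_self_add_conway_const_le (B : Fin n → Bool) :
    conway B B + conway (fun _ => c) B ≤
      conway (fun _ : Fin n => c) (fun _ => c) + conway B (fun _ => c) := by
  rw [conway_const_const, conway_eq_sum_filter, conway_eq_sum_filter, conway_eq_sum_filter]
  exact sum_add_sum_le_of_inter_subset (filter_overlap_self_inter_subset c B)

theorem conway_self_add_conway_const_eq_iff (hB : B ≠ fun _ => c) :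
    conway B B + conway (fun _ => c) B =
        conway (fun _ : Fin n => c) (fun _ => c) + conway B (fun _ => c) ↔
      B = (fun _ => !c) ∨ B = fun j : Fin n => if (j : ℕ) < n - 1 then c else !c := by
  have hn := (neZero_of_ne hB).ne
  rw [conway_const_const, conway_eq_sum_filter, conway_eq_sum_filter, conway_eq_sum_filter,
    sum_add_sum_eq_iff_of_inter_subset (fun _ => Nat.two_pow_pos _)
      (filter_overlap_self_inter_subset c B)]
  refine ⟨fun h => (forall_overlap_iff c hB).1 fun i => ?_, fun h => ⟨?_, ?_⟩⟩
  · have hi : i ∈ _ ∪ _ := h.1 ▸ mem_univ i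
    simpa using hi
  · exact eq_univ_of_forall fun i => by simpa using (forall_overlap_iff c hB).2 h i
  · have hlast : B ⟨n - 1, by omega⟩ ≠ c := by rcases h with rfl | rfl <;> simp
    have hU : univ.filter (Overlap B (fun _ => c)) = ∅ :=
      filter_false_of_mem fun i _ => not_overlap_const_of_last c hn hlast
    rw [hU]
    exact subset_empty.1 (hU ▸ filter_overlap_self_inter_subset c B)

end Constant

end Conway

open Conway

theorem flipped_allHeads_beats_general (n : ℕ) (A B : Fin n → Bool)
    (hA : A = fun _ => true) (hB : B ≠ A) :
    conway B A < conway B B ∧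
      (conway B B : ℤ) - (conway B A : ℤ) ≤ (conway A A : ℤ) - (conway A B : ℤ) ∧
      ((conway A A : ℤ) - (conway A B : ℤ) = (conway B B : ℤ) - (conway B A : ℤ) ↔
        B = (fun _ => false) ∨ B = fun i : Fin n => decide ((i : ℕ) < n - 1)) := by
  subst hA
  have hle := conway_self_add_conway_const_le true B
  have heq := conway_self_add_conway_const_eq_iff true hB
  simp only [Bool.not_true, Bool.if_false_right, Bool.and_true] at heq
  refine ⟨conway_lt_conway_self hB, by omega, ?_⟩
  rw [← heq]
  omega

/-- Let `A = HH…H` be the all-heads string of length `n ≥ 3` and let `B ≠ A`. Then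
`C(B,B) - C(B,A) > 0` and `C(A,A) - C(A,B) ≥ C(B,B) - C(B,A)`, with equality iff `B` is
the all-tails string `TT…T` or the string `HH…HT`. (Equivalently, the odds
`q(A,B) = (C(A,A) - C(A,B))/(C(B,B) - C(B,A))` in favor of `A` in the flipped
Penney-Ante game satisfy `q(A,B) ≥ 1`, with equality exactly for those two `B`.) -/
theorem flipped_allHeads_beats (n : ℕ) (hn : 3 ≤ n) (A B : Fin n → Bool)
    (hA : A = fun _ => true) (hB : B ≠ A) :
    conway B A < conway B B ∧
      (conway B B : ℤ) - (conway B A : ℤ) ≤ (conway A A : ℤ) - (conway A B : ℤ) ∧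
      ((conway A A : ℤ) - (conway A B : ℤ) = (conway B B : ℤ) - (conway B A : ℤ) ↔
        B = (fun _ => false) ∨ B = fun i : Fin n => decide ((i : ℕ) < n - 1)) :=
  flipped_allHeads_beats_general n A B hA hB
end

section
/- Let n ≥ 3 and let A be a head/tail string of length n that is neither the all-heads string HH…H nor the all-tails string TT…T. Then there exists a head/tail string B of length n with B ≠ A such that C(A,A) − C(A,B) < C(B,B) − C(B,A); equivalently, the odds q(A,B) = (C(A,A) − C(A,B))/(C(B,B) − C(B,A)) in favor of A in the flipped Penney-Ante game satisfy q(A,B) < 1. -/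
lemma sum_pow_fin (n : ℕ) : ∑ i : Fin n, 2 ^ (n - 1 - (i:ℕ)) = 2 ^ n - 1 := by
  rw [Fin.sum_univ_eq_sum_range (fun i => 2 ^ (n - 1 - i)) n,
    Finset.sum_range_reflect (fun j => 2 ^ j) n]
  induction n with
  | zero => simp
  | succ m ih =>
    have : (1:ℕ) ≤ 2 ^ m := Nat.one_le_two_pow
    rw [Finset.sum_range_succ, ih, pow_succ]
    omega

/-- If `A` is a string of length `n ≥ 3` that is neither all heads nor all tails, then
there is a string `B ≠ A` with `C(A,A) - C(A,B) < C(B,B) - C(B,A)`, i.e. the odds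
`q(A,B)` in favor of `A` in the flipped Penney-Ante game satisfy `q(A,B) < 1`. -/
theorem flipped_nonconstant_loses (n : ℕ) (hn : 3 ≤ n) (A : Fin n → Bool)
    (hA1 : A ≠ fun _ => true) (hA2 : A ≠ fun _ => false) :
    ∃ B : Fin n → Bool, B ≠ A ∧
      (conway A A : ℤ) - (conway A B : ℤ) < (conway B B : ℤ) - (conway B A : ℤ) := by
  haveI : NeZero n := ⟨by omega⟩
  set b := !(A 0) with hb
  refine ⟨fun _ => b, ?_, ?_⟩
  · intro h
    have := congrFun h 0
    simp [hb] at this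
  have hBB : conway (fun _ : Fin n => b) (fun _ => b) = 2 ^ n - 1 := by
    unfold conway
    simp [sum_pow_fin]
  have hBA : conway (fun _ : Fin n => b) A = 0 := by
    unfold conway
    apply Finset.sum_eq_zero
    intro i _
    rw [if_neg]
    intro h
    have h0 := h 0 (by simp)
    simp [hb] at h0
  have hAA : conway A A < 2 ^ n - 1 := by
    rw [← sum_pow_fin n]
    unfold conway
    apply Finset.sum_lt_sum
    · intro i _
      split <;> simp
    · refine ⟨⟨1, by omega⟩, Finset.mem_univ _, ?_⟩
      rw [if_neg]
      · exact Nat.pos_of_ne_zero (by positivity)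
      intro h
      have key : ∀ k : ℕ, (hk : k < n) → A ⟨k, hk⟩ = A 0 := by
        intro k
        induction k with
        | zero =>
          intro hk
          congr 1
        | succ m ih =>
          intro hk
          have hm : m < n := by omega
          have h1 := h ⟨m, hm⟩ (by show 1 + m < n; omega)
          have heq : (⟨1, by omega⟩ + ⟨m, hm⟩ : Fin n) = ⟨m + 1, hk⟩ := by
            apply Fin.ext
            show (1 + m) % n = m + 1
            rw [Nat.mod_eq_of_lt (by omega)]
            omega
          rw [heq] at h1
          rw [h1, ih hm]
      have hconst : A = fun _ => A 0 := by
        funext i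
        have := key i.val i.isLt
        simpa using this
      cases hA0 : A 0 with
      | true => exact hA1 (by rw [hconst, hA0])
      | false => exact hA2 (by rw [hconst, hA0])
  rw [hBB, hBA]
  have h1 : (conway A A : ℤ) < ((2 ^ n - 1 : ℕ) : ℤ) := by exact_mod_cast hAA
  have h0 : (0 : ℤ) ≤ (conway A (fun _ : Fin n => b) : ℤ) := Int.natCast_nonneg _
  omega
end

section
/- Let n ≥ 3, let A be the all-heads string HH…H of length n, and let B = b_1…b_n be any head/tail string of length n. Let s be the number of leading H bits of B (the largest s with b_1 = … = b_s = H) and let t be the number of trailing H bits of B (the largest t with b_{n−t+1} = … = b_n = H). Then C(A,B) = 2^s − 1 and C(B,A) = 2^t − 1; in particular C(A,A) = 2^n − 1. Moreover, if B is not constant (i.e., B is neither HH…H nor TT…T), then C(B,B) ≤ 2^n − 1 − 2^{n−2}. -/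
/-!
Against the all-heads string, the shift by `i` contributes to `C(A, B)` exactly when the
first `n - i` letters of `B` are heads, and to `C(B, A)` exactly when its last `n - i`
letters are; so the contributing shifts are the last `s` (resp. `t`) ones and the sum is
`2^0 + ⋯ + 2^(s-1)`. A string that agrees with itself under the shift by one position is
constant, so a nonconstant `B` loses the term `2^(n-2)` of `C(B, B)`.
-/

open Finset

/-- The paper's `δ_{i+1} = 1` (positions are 0-indexed). -/
def Overlaps {n : ℕ} (A B : Fin n → Bool) (i : Fin n) : Prop :=
  ∀ j : Fin n, (i : ℕ) + (j : ℕ) < n → A (i + j) = B j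

theorem sum_two_pow_rev_of_sub_le (n s : ℕ) (hs : s ≤ n) :
    ∑ i : Fin n, (if n - s ≤ (i : ℕ) then 2 ^ (n - 1 - (i : ℕ)) else 0) = 2 ^ s - 1 := by
  rw [← Equiv.sum_comp Fin.revPerm]
  have hrev : ∀ i : Fin n, (if n - s ≤ (Fin.revPerm i : ℕ) then 2 ^ (n - 1 - (Fin.revPerm i : ℕ))
      else 0) = if (i : ℕ) < s then 2 ^ (i : ℕ) else 0 := by
    intro i
    have hi := i.isLt
    simp only [Fin.revPerm_apply, Fin.val_rev]
    split_ifs <;> first | omega | congr 1; omega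
  simp only [hrev]
  rw [Fin.sum_univ_eq_sum_range (fun i => if i < s then 2 ^ i else 0), ← sum_filter,
    show (range n).filter (· < s) = range s by ext; simp; omega, Nat.geomSum_eq le_rfl]
  simp

theorem sum_two_pow_rev (n : ℕ) : ∑ i : Fin n, 2 ^ (n - 1 - (i : ℕ)) = 2 ^ n - 1 := by
  simpa using sum_two_pow_rev_of_sub_le n n le_rfl

section Conway

variable {n : ℕ} {A B : Fin n → Bool}

theorem conway_eq_of_overlaps_iff {s : ℕ} (hs : s ≤ n)
    (h : ∀ i, Overlaps A B i ↔ n - s ≤ (i : ℕ)) : conway A B = 2 ^ s - 1 := by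
  rw [conway, ← sum_two_pow_rev_of_sub_le n s hs]
  exact sum_congr rfl fun i _ => if_congr (h i) rfl rfl

theorem conway_le_of_not_overlaps {i : Fin n} (h : ¬ Overlaps A B i) :
    conway A B ≤ 2 ^ n - 1 - 2 ^ (n - 1 - (i : ℕ)) := by
  unfold Overlaps at h
  rw [← sum_two_pow_rev n, ← add_sum_erase univ _ (mem_univ i), Nat.add_sub_cancel_left,
    conway, ← add_sum_erase univ _ (mem_univ i), if_neg h, zero_add]
  exact sum_le_sum fun k _ => by split_ifs <;> simp

theorem conway_allHeads_left {s : ℕ} (hs : s ≤ n)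
    (hsl : ∀ i : Fin n, (i : ℕ) < s → B i = true) (hsm : ∀ h : s < n, B ⟨s, h⟩ = false) :
    conway (fun _ => true) B = 2 ^ s - 1 := by
  refine conway_eq_of_overlaps_iff hs fun i =>
    ⟨fun hi => ?_, fun hi j hj => (hsl j (by omega)).symm⟩
  by_contra hlt
  have hsn : s < n := by omega
  simpa [hsm hsn] using hi ⟨s, hsn⟩ (by simp only; omega)

theorem conway_allHeads_right {t : ℕ} (ht : t ≤ n)
    (htl : ∀ i : Fin n, n - t ≤ (i : ℕ) → B i = true)
    (htm : ∀ h : t < n, B ⟨n - t - 1, by omega⟩ = false) :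
    conway B (fun _ => true) = 2 ^ t - 1 := by
  refine conway_eq_of_overlaps_iff ht fun i =>
    ⟨fun hi => ?_, fun hi j hj => htl _ (by rw [Fin.val_add_eq_of_add_lt hj]; omega)⟩
  by_contra hlt
  have htn : t < n := by omega
  let j : Fin n := ⟨n - t - 1 - i, by omega⟩
  have hj : (i : ℕ) + (j : ℕ) < n := by simp only [j]; omega
  have hij : i + j = ⟨n - t - 1, by omega⟩ := Fin.ext <| by
    rw [Fin.val_add_eq_of_add_lt hj]; simp only [j]; omega
  simpa [hij, htm htn] using hi j hj

theorem eq_const_of_overlaps_self_one (h1 : 1 < n) (h : Overlaps B B ⟨1, h1⟩) :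
    ∃ b, B = fun _ => b := by
  refine ⟨B ⟨0, by omega⟩, funext fun ⟨k, hk⟩ => ?_⟩
  induction k with
  | zero => rfl
  | succ m ih =>
    have hm : 1 + m < n := by omega
    have hshift : (⟨1, h1⟩ + ⟨m, by omega⟩ : Fin n) = ⟨m + 1, hk⟩ :=
      Fin.ext <| by rw [Fin.val_add_eq_of_add_lt hm]; simp only; omega
    rw [← hshift, h _ hm, ih]

theorem conway_self_le_of_ne_const (h1 : 1 < n) (hB : ∀ b, B ≠ fun _ => b) :
    conway B B ≤ 2 ^ n - 1 - 2 ^ (n - 2) := by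
  have hnot : ¬ Overlaps B B ⟨1, h1⟩ := fun h =>
    (eq_const_of_overlaps_self_one h1 h).elim hB
  simpa [Nat.sub_sub] using conway_le_of_not_overlaps hnot

end Conway

/-- Let `A = HH…H` have length `n ≥ 3`, let `B` be any string of length `n`, let `s` be
the number of leading `H` bits of `B` and `t` the number of trailing `H` bits of `B`.
Then `C(A,B) = 2^s - 1`, `C(B,A) = 2^t - 1`, `C(A,A) = 2^n - 1`, and if `B` is not
constant then `C(B,B) ≤ 2^n - 1 - 2^{n-2}`. -/
theorem conway_allHeads_values (n : ℕ) (hn : 3 ≤ n) (A B : Fin n → Bool)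
    (hA : A = fun _ => true) (s t : ℕ) (hs : s ≤ n) (ht : t ≤ n)
    (hsl : ∀ i : Fin n, (i : ℕ) < s → B i = true)
    (hsm : ∀ h : s < n, B ⟨s, h⟩ = false)
    (htl : ∀ i : Fin n, n - t ≤ (i : ℕ) → B i = true)
    (htm : ∀ _ : t < n, B ⟨n - t - 1, by omega⟩ = false) :
    conway A B = 2 ^ s - 1 ∧ conway B A = 2 ^ t - 1 ∧ conway A A = 2 ^ n - 1 ∧
      ((B ≠ fun _ => true) ∧ (B ≠ fun _ => false) →
        conway B B ≤ 2 ^ n - 1 - 2 ^ (n - 2)) := by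
  subst hA
  refine ⟨conway_allHeads_left hs hsl hsm, conway_allHeads_right ht htl htm,
    conway_allHeads_left le_rfl (fun _ _ => rfl) (fun h => absurd h (lt_irrefl n)), ?_⟩
  rintro ⟨hBt, hBf⟩
  exact conway_self_le_of_ne_const (by omega) fun b => by cases b <;> assumption
end
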